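/- arXiv:2008.05521 — 7 statements merged into one kernel-verified Lean document; each statement's English description precedes it below -/
import Mathlib

section
/- Let b, d > 0 and let c₁, c₂ be real numbers with √(c₁² + c₂²) < min(1/√(bd), 1/b). Define x(t) = √(d/b)/(1/√(bd) + c₁ cos(√(bd) t) − c₂ sin(√(bd) t)) and y(t) = 1/(1/b + c₁ sin(√(bd) t) + c₂ cos(√(bd) t)). Then both denominators are positive for all real t, the functions x and y are differentiable and satisfy x'(t) = x(t)²(b/y(t) − 1) and y'(t) = −y(t)²(d/x(t) − 1) for all t, both x and y are periodic with period 2π/√(bd), and moreover x(t) > d/2 and y(t) > b/2 for all t. -/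
/-- Explicit periodic solutions of the explosive predator-prey system
`x' = x²(b/y − 1)`, `y' = −y²(d/x − 1)` whose reciprocal circle stays in the
first quadrant: denominators are positive, the ODEs hold, the solution is
periodic of period `2π/√(bd)`, and `x > d/2`, `y > b/2`. -/
theorem explosive_predator_prey_periodic_solution
    (b d : ℝ) (hb : 0 < b) (hd : 0 < d) (c₁ c₂ : ℝ)
    (hR : Real.sqrt (c₁ ^ 2 + c₂ ^ 2) <
      min (1 / Real.sqrt (b * d)) (1 / b))
    (X Y x y : ℝ → ℝ)
    (hX : X = fun t => 1 / Real.sqrt (b * d) + c₁ * Real.cos (Real.sqrt (b * d) * t)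
      - c₂ * Real.sin (Real.sqrt (b * d) * t))
    (hY : Y = fun t => 1 / b + c₁ * Real.sin (Real.sqrt (b * d) * t)
      + c₂ * Real.cos (Real.sqrt (b * d) * t))
    (hx : x = fun t => Real.sqrt (d / b) / X t)
    (hy : y = fun t => 1 / Y t) :
    (∀ t : ℝ, 0 < X t ∧ 0 < Y t) ∧
    (∀ t : ℝ, HasDerivAt x ((x t) ^ 2 * (b / y t - 1)) t ∧
      HasDerivAt y (-(y t) ^ 2 * (d / x t - 1)) t) ∧
    (∀ t : ℝ, x (t + 2 * Real.pi / Real.sqrt (b * d)) = x t ∧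
      y (t + 2 * Real.pi / Real.sqrt (b * d)) = y t) ∧
    (∀ t : ℝ, d / 2 < x t ∧ b / 2 < y t) := by
  obtain ⟨hR1, hR2⟩ := lt_min_iff.mp hR
  have hbd : (0:ℝ) < b * d := mul_pos hb hd
  set ω := Real.sqrt (b * d) with hωdef
  have hω : 0 < ω := Real.sqrt_pos.mpr hbd
  set s := Real.sqrt (d / b) with hsdef
  have hs : 0 < s := Real.sqrt_pos.mpr (div_pos hd hb)
  have hsω : s * ω = d := by
    rw [hsdef, hωdef, ← Real.sqrt_mul (le_of_lt (div_pos hd hb)),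
      show d / b * (b * d) = d ^ 2 by field_simp, Real.sqrt_sq hd.le]
  have hω2 : ω ^ 2 = b * d := Real.sq_sqrt hbd.le
  have hsb : s * b = ω := by
    have h : (s * b) * ω = ω * ω := by linear_combination b * hsω - hω2
    exact mul_right_cancel₀ hω.ne' h
  set R := Real.sqrt (c₁ ^ 2 + c₂ ^ 2) with hRdef
  have hRnn : 0 ≤ R := Real.sqrt_nonneg _
  have key : ∀ u : ℝ, u ^ 2 ≤ c₁ ^ 2 + c₂ ^ 2 → |u| ≤ R := by
    intro u hu
    rw [hRdef, ← Real.sqrt_sq_eq_abs]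
    exact Real.sqrt_le_sqrt hu
  have key1 : ∀ θ : ℝ, |c₁ * Real.cos θ - c₂ * Real.sin θ| ≤ R := by
    intro θ
    apply key
    nlinarith [Real.sin_sq_add_cos_sq θ, sq_nonneg (c₁ * Real.sin θ + c₂ * Real.cos θ)]
  have key2 : ∀ θ : ℝ, |c₁ * Real.sin θ + c₂ * Real.cos θ| ≤ R := by
    intro θ
    apply key
    nlinarith [Real.sin_sq_add_cos_sq θ, sq_nonneg (c₁ * Real.cos θ - c₂ * Real.sin θ)]
  -- bounds on X and Y
  have hXlb : ∀ t, 1 / ω - R ≤ X t := by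
    intro t
    have := neg_abs_le (c₁ * Real.cos (ω * t) - c₂ * Real.sin (ω * t))
    have h1 := key1 (ω * t)
    rw [hX]; dsimp only; linarith
  have hXub : ∀ t, X t ≤ 1 / ω + R := by
    intro t
    have h1 := le_abs_self (c₁ * Real.cos (ω * t) - c₂ * Real.sin (ω * t))
    have h2 := key1 (ω * t)
    rw [hX]; dsimp only; linarith
  have hYlb : ∀ t, 1 / b - R ≤ Y t := by
    intro t
    have := neg_abs_le (c₁ * Real.sin (ω * t) + c₂ * Real.cos (ω * t))
    have h1 := key2 (ω * t)
    rw [hY]; dsimp only; linarith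
  have hYub : ∀ t, Y t ≤ 1 / b + R := by
    intro t
    have h1 := le_abs_self (c₁ * Real.sin (ω * t) + c₂ * Real.cos (ω * t))
    have h2 := key2 (ω * t)
    rw [hY]; dsimp only; linarith
  have hXpos : ∀ t, 0 < X t := fun t => lt_of_lt_of_le (by linarith [hR1]) (hXlb t)
  have hYpos : ∀ t, 0 < Y t := fun t => lt_of_lt_of_le (by linarith [hR2]) (hYlb t)
  refine ⟨fun t => ⟨hXpos t, hYpos t⟩, ?_, ?_, ?_⟩
  · -- the ODEs
    intro t
    have hlin : HasDerivAt (fun t : ℝ => ω * t) ω t := by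
      simpa using (hasDerivAt_id t).const_mul ω
    have hc : HasDerivAt (fun t : ℝ => Real.cos (ω * t)) (-Real.sin (ω * t) * ω) t :=
      (Real.hasDerivAt_cos (ω * t)).comp t hlin
    have hsn : HasDerivAt (fun t : ℝ => Real.sin (ω * t)) (Real.cos (ω * t) * ω) t :=
      (Real.hasDerivAt_sin (ω * t)).comp t hlin
    have hXd : HasDerivAt X (c₁ * (-Real.sin (ω * t) * ω) - c₂ * (Real.cos (ω * t) * ω)) t := by
      rw [hX]
      simpa [Pi.add_def, Pi.sub_def] using ((hasDerivAt_const t (1 / ω)).add (hc.const_mul c₁)).sub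
        (hsn.const_mul c₂)
    have hYd : HasDerivAt Y (c₁ * (Real.cos (ω * t) * ω) + c₂ * (-Real.sin (ω * t) * ω)) t := by
      rw [hY]
      simpa [Pi.add_def, Pi.sub_def] using ((hasDerivAt_const t (1 / b)).add (hsn.const_mul c₁)).add
        (hc.const_mul c₂)
    have hXne : X t ≠ 0 := (hXpos t).ne'
    have hYne : Y t ≠ 0 := (hYpos t).ne'
    constructor
    · have h := (hasDerivAt_const t s).fun_div hXd hXne
      rw [hx]
      convert h using 1
      case e'_4 => rfl
      case e'_5 => rfl
      rw [hy]
      dsimp only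
      rw [div_div_eq_mul_div, div_one, div_pow, div_mul_eq_mul_div,
        show (0 : ℝ) * X t - s * (c₁ * (-Real.sin (ω*t)*ω) - c₂ * (Real.cos (ω*t)*ω))
          = s*ω*(c₁*Real.sin (ω*t)+c₂*Real.cos (ω*t)) by ring]
      congr 1
      rw [hY]
      dsimp only
      field_simp
      linear_combination (c₁*Real.sin (ω*t)+c₂*Real.cos (ω*t))*hsb
    · have h := (hasDerivAt_const t (1:ℝ)).fun_div hYd hYne
      rw [hy]
      convert h using 1
      case e'_4 => rfl
      case e'_5 => rfl
      rw [hx]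
      dsimp only
      rw [div_div_eq_mul_div,
        show -(1/Y t)^2 * (d * X t / s - 1) = -((d * X t / s - 1)/(Y t)^2) by ring,
        show ((0:ℝ)*Y t - 1*(c₁*(Real.cos (ω*t)*ω)+c₂*(-Real.sin (ω*t)*ω)))/(Y t)^2
          = -((ω*(c₁*Real.cos (ω*t)-c₂*Real.sin (ω*t)))/(Y t)^2) by ring]
      congr 1
      congr 1
      rw [hX]
      dsimp only
      field_simp
      linear_combination ((c₁*Real.cos (ω*t)-c₂*Real.sin (ω*t))*ω - 1 - 2*ω*(c₁*Real.cos (ω*t)-c₂*Real.sin (ω*t)))*hsω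
  · -- periodicity
    intro t
    have harg : ω * (t + 2 * Real.pi / ω) = ω * t + 2 * Real.pi := by
      field_simp
    constructor
    · rw [hx, hX]; dsimp only; rw [harg, Real.cos_add_two_pi, Real.sin_add_two_pi]
    · rw [hy, hY]; dsimp only; rw [harg, Real.cos_add_two_pi, Real.sin_add_two_pi]
  · -- lower bounds
    intro t
    constructor
    · have h1 : X t < 2 / ω := lt_of_le_of_lt (hXub t) (by rw [show (2:ℝ)/ω = 1/ω + 1/ω by ring]; linarith)
      have h2 : s / (2 / ω) < s / X t := div_lt_div_of_pos_left hs (hXpos t) h1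
      have h3 : s / (2 / ω) = d / 2 := by rw [div_div_eq_mul_div, ← hsω]
      rw [hx]; dsimp only; linarith
    · have h1 : Y t < 2 / b := lt_of_le_of_lt (hYub t) (by rw [show (2:ℝ)/b = 1/b + 1/b by ring]; linarith)
      have h2 : (1:ℝ) / (2 / b) < 1 / Y t := div_lt_div_of_pos_left one_pos (hYpos t) h1
      have h3 : (1:ℝ) / (2 / b) = b / 2 := by field_simp
      rw [hy]; dsimp only; linarith
end

section
/- Let b, d > 0 and c₁, c₂ be real numbers with √(c₁² + c₂²) > 1/√(bd). Define X(t) = 1/√(bd) + c₁ cos(√(bd) t) − c₂ sin(√(bd) t) and Y(t) = 1/b + c₁ sin(√(bd) t) + c₂ cos(√(bd) t), and assume X(0) > 0. Then there exists T > 0 such that X(T) = 0 and X(t) > 0 for all t ∈ [0, T). Moreover, the function x(t) = √(d/b)/X(t) tends to +∞ as t → T⁻, and if in addition Y(T) > 0, then y(t) = 1/Y(t) tends to the finite positive limit 1/Y(T) as t → T⁻. -/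
open Filter Topology

/-- Blow-up of the prey: if the circle radius `√(c₁²+c₂²)` exceeds `1/√(bd)` and
`X(0) > 0`, then `X` has a first positive zero `T`, the corresponding prey
population `x = √(d/b)/X` tends to `+∞` as `t → T⁻`, and if `Y(T) > 0` the
predator population `y = 1/Y` tends to the finite positive limit `1/Y(T)`. -/
theorem explosive_predator_prey_blow_up
    (b d : ℝ) (hb : 0 < b) (hd : 0 < d) (c₁ c₂ : ℝ)
    (hR : 1 / Real.sqrt (b * d) < Real.sqrt (c₁ ^ 2 + c₂ ^ 2))
    (X Y : ℝ → ℝ)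
    (hX : X = fun t => 1 / Real.sqrt (b * d) + c₁ * Real.cos (Real.sqrt (b * d) * t)
      - c₂ * Real.sin (Real.sqrt (b * d) * t))
    (hY : Y = fun t => 1 / b + c₁ * Real.sin (Real.sqrt (b * d) * t)
      + c₂ * Real.cos (Real.sqrt (b * d) * t))
    (hX0 : 0 < X 0) :
    ∃ T : ℝ, 0 < T ∧ X T = 0 ∧ (∀ t ∈ Set.Ico (0 : ℝ) T, 0 < X t) ∧
      Tendsto (fun t => Real.sqrt (d / b) / X t) (𝓝[<] T) atTop ∧
      (0 < Y T →
        Tendsto (fun t => 1 / Y t) (𝓝[<] T) (𝓝 (1 / Y T))) := by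
  set ω : ℝ := Real.sqrt (b * d) with hωdef
  have hω : 0 < ω := Real.sqrt_pos.mpr (by positivity)
  set R : ℝ := Real.sqrt (c₁ ^ 2 + c₂ ^ 2) with hRdef
  have hRpos : 0 < R := lt_trans (by positivity) hR
  have hR2 : R ^ 2 = c₁ ^ 2 + c₂ ^ 2 := Real.sq_sqrt (by positivity)
  have hXc : Continuous X := by subst hX; fun_prop
  have hYc : Continuous Y := by subst hY; fun_prop
  have hc1R : -1 ≤ -c₁ / R ∧ -c₁ / R ≤ 1 := by
    have h1 : |c₁| ≤ R := by
      rw [hRdef, ← Real.sqrt_sq_eq_abs]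
      exact Real.sqrt_le_sqrt (by nlinarith)
    rw [abs_le] at h1
    constructor
    · rw [le_div_iff₀ hRpos]; nlinarith
    · rw [div_le_one hRpos]; nlinarith
  obtain ⟨θ, hθ1, hθ2, hθcos, hθsin⟩ :
      ∃ θ : ℝ, -Real.pi ≤ θ ∧ θ ≤ Real.pi ∧
        Real.cos θ = -c₁ / R ∧ Real.sin θ = c₂ / R := by
    rcases le_or_gt 0 c₂ with h | h
    · refine ⟨Real.arccos (-c₁ / R),
        le_trans (by linarith [Real.pi_pos]) (Real.arccos_nonneg _),
        Real.arccos_le_pi _, Real.cos_arccos hc1R.1 hc1R.2, ?_⟩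
      rw [Real.sin_arccos,
        show 1 - (-c₁ / R) ^ 2 = (c₂ / R) ^ 2 by field_simp; nlinarith,
        Real.sqrt_sq (by positivity)]
    · refine ⟨-Real.arccos (-c₁ / R),
        neg_le_neg (Real.arccos_le_pi _),
        le_trans (neg_nonpos.mpr (Real.arccos_nonneg _)) Real.pi_pos.le,
        by rw [Real.cos_neg]; exact Real.cos_arccos hc1R.1 hc1R.2, ?_⟩
      rw [Real.sin_neg, Real.sin_arccos,
        show 1 - (-c₁ / R) ^ 2 = (-(c₂ / R)) ^ 2 by field_simp; nlinarith,
        Real.sqrt_sq (le_of_lt (by rw [← neg_div]; exact div_pos (by linarith) hRpos))]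
      ring
  -- a positive time where X is negative
  set t₁ : ℝ := (θ + 2 * Real.pi) / ω with ht₁def
  have ht₁pos : 0 < t₁ := by
    apply div_pos _ hω
    have := Real.pi_pos
    linarith
  have hXt₁ : X t₁ < 0 := by
    have hωt₁ : ω * t₁ = θ + 2 * Real.pi := by
      rw [ht₁def]; field_simp
    rw [hX]
    simp only
    rw [hωt₁, Real.cos_add_two_pi, Real.sin_add_two_pi, hθcos, hθsin]
    have key : c₁ * (-c₁ / R) - c₂ * (c₂ / R) = -R := by
      field_simp; nlinarith
    linarith [key, hR]
  -- the set of nonnegative zeros of X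
  set S : Set ℝ := Set.Ici 0 ∩ X ⁻¹' {0} with hSdef
  have hSclosed : IsClosed S := isClosed_Ici.inter (isClosed_singleton.preimage hXc)
  have hSne : S.Nonempty := by
    have h0 : (0 : ℝ) ∈ Set.Icc (X t₁) (X 0) := ⟨le_of_lt hXt₁, le_of_lt hX0⟩
    obtain ⟨s, hs, hXs⟩ := intermediate_value_Icc' ht₁pos.le (hXc.continuousOn) h0
    exact ⟨s, hs.1, hXs⟩
  have hSbdd : BddBelow S := ⟨0, fun s hs => hs.1⟩
  set T : ℝ := sInf S with hTdef
  have hTS : T ∈ S := hSclosed.csInf_mem hSne hSbdd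
  have hXT : X T = 0 := hTS.2
  have hTnonneg : 0 ≤ T := hTS.1
  have hTpos : 0 < T := by
    rcases hTnonneg.lt_or_eq with h | h
    · exact h
    · exfalso; rw [← h] at hXT; linarith
  have hpos : ∀ t ∈ Set.Ico (0 : ℝ) T, 0 < X t := by
    intro t ht
    by_contra hle
    push_neg at hle
    rcases hle.lt_or_eq with h | h
    · have h0 : (0 : ℝ) ∈ Set.Icc (X t) (X 0) := ⟨le_of_lt h, le_of_lt hX0⟩
      obtain ⟨s, hs, hXs⟩ := intermediate_value_Icc' ht.1 (hXc.continuousOn) h0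
      have : T ≤ s := csInf_le hSbdd ⟨hs.1, hXs⟩
      linarith [hs.2, ht.2]
    · have : T ≤ t := csInf_le hSbdd ⟨ht.1, h⟩
      linarith [ht.2]
  refine ⟨T, hTpos, hXT, hpos, ?_, ?_⟩
  · -- blow-up
    have hXtend : Tendsto X (𝓝[<] T) (𝓝[>] 0) := by
      rw [tendsto_nhdsWithin_iff]
      constructor
      · have := hXc.continuousAt (x := T)
        rw [ContinuousAt, hXT] at this
        exact this.mono_left nhdsWithin_le_nhds
      · filter_upwards [Ioo_mem_nhdsLT_of_mem (Set.mem_Ioc.mpr ⟨hTpos, le_refl T⟩)]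
          with t ht
        exact hpos t ⟨ht.1.le, ht.2⟩
    have h1 : Tendsto (fun t => (X t)⁻¹) (𝓝[<] T) atTop := hXtend.inv_tendsto_nhdsGT_zero
    have h2 : (0 : ℝ) < Real.sqrt (d / b) := Real.sqrt_pos.mpr (by positivity)
    simpa [div_eq_mul_inv] using h1.const_mul_atTop h2
  · intro hYT
    have : Tendsto (fun t => 1 / Y t) (𝓝 T) (𝓝 (1 / Y T)) := by
      exact (tendsto_const_nhds.div (hYc.tendsto T) (ne_of_gt hYT))
    exact this.mono_left nhdsWithin_le_nhds
end

section
/- Let a, b, c, d > 0 with d > b and a > c. Let x, y : [0, ∞) → ℝ be differentiable functions with x(t) > 0 and y(t) > 0 for all t ≥ 0, satisfying x'(t) = a x(t) + x(t)²(b/y(t) − 1) and y'(t) = d y(t) + y(t)²(c/x(t) − 1) for all t ≥ 0. Then x(t) → (ad − bc)/(d − b) and y(t) → (ad − bc)/(a − c) as t → ∞. -/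
open Filter Topology

/-- Positivity of a quadratic form with nonnegative discriminant condition. -/
lemma quad_nonneg (A B C u v : ℝ) (hA : 0 < A) (hdisc : B ^ 2 ≤ 4 * A * C) :
    0 ≤ A * u ^ 2 + B * (u * v) + C * v ^ 2 := by
  nlinarith [sq_nonneg (2 * A * u + B * v), sq_nonneg v, mul_pos hA hA]

/-- Stable coexistence for the explosive competing species system: when
`d > b` and `a > c`, every globally defined positive solution of
`x' = ax + x²(b/y − 1)`, `y' = dy + y²(c/x − 1)` converges to the
coexistence equilibrium `((ad − bc)/(d − b), (ad − bc)/(a − c))`. -/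
theorem competing_species_stable_coexistence
    (a b c d : ℝ) (ha : 0 < a) (hb : 0 < b) (hc : 0 < c) (hd : 0 < d)
    (hdb : b < d) (hac : c < a)
    (x y : ℝ → ℝ)
    (hxpos : ∀ t ∈ Set.Ici (0 : ℝ), 0 < x t)
    (hypos : ∀ t ∈ Set.Ici (0 : ℝ), 0 < y t)
    (hx : ∀ t ∈ Set.Ici (0 : ℝ), HasDerivWithinAt x
      (a * x t + (x t) ^ 2 * (b / y t - 1)) (Set.Ici 0) t)
    (hy : ∀ t ∈ Set.Ici (0 : ℝ), HasDerivWithinAt y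
      (d * y t + (y t) ^ 2 * (c / x t - 1)) (Set.Ici 0) t) :
    Tendsto x atTop (𝓝 ((a * d - b * c) / (d - b))) ∧
    Tendsto y atTop (𝓝 ((a * d - b * c) / (a - c))) := by
  -- basic quantities
  set D : ℝ := a * d - b * c with hD
  have hDpos : 0 < D := by nlinarith
  have hDne : D ≠ 0 := ne_of_gt hDpos
  set X₀ : ℝ := (d - b) / D with hX₀
  set Y₀ : ℝ := (a - c) / D with hY₀
  have hX₀pos : 0 < X₀ := div_pos (by linarith) hDpos
  have hY₀pos : 0 < Y₀ := div_pos (by linarith) hDpos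
  set k : ℝ := D / (a + d) with hk
  have hkpos : 0 < k := div_pos hDpos (by linarith)
  have hkeq : k * (a + d) = D := div_mul_cancel₀ D (by positivity)
  -- deviations
  set u : ℝ → ℝ := fun t => (x t)⁻¹ - X₀ with hu_def
  set v : ℝ → ℝ := fun t => (y t)⁻¹ - Y₀ with hv_def
  -- derivatives of u and v on Ici 0
  have hu : ∀ t ∈ Set.Ici (0 : ℝ),
      HasDerivWithinAt u (-(a * u t + b * v t)) (Set.Ici 0) t := by
    intro t ht
    have hx0 := hxpos t ht
    have hy0 := hypos t ht
    have h1 : HasDerivWithinAt u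
        (-(a * x t + (x t) ^ 2 * (b / y t - 1)) / (x t) ^ 2) (Set.Ici 0) t :=
      ((hx t ht).inv hx0.ne').sub_const X₀
    convert h1 using 1
    simp only [hu_def, hv_def, hX₀, hY₀, hD]
    field_simp [show a * d - b * c ≠ 0 from hDne]
    ring
  have hv : ∀ t ∈ Set.Ici (0 : ℝ),
      HasDerivWithinAt v (-(c * u t + d * v t)) (Set.Ici 0) t := by
    intro t ht
    have hx0 := hxpos t ht
    have hy0 := hypos t ht
    have h1 : HasDerivWithinAt v
        (-(d * y t + (y t) ^ 2 * (c / x t - 1)) / (y t) ^ 2) (Set.Ici 0) t :=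
      ((hy t ht).inv hy0.ne').sub_const Y₀
    convert h1 using 1
    simp only [hu_def, hv_def, hX₀, hY₀, hD]
    field_simp [show d * a - c * b ≠ 0 by rw [mul_comm d, mul_comm c]; exact hDne]
    ring
  -- Lyapunov function
  set V : ℝ → ℝ := fun t => c * u t ^ 2 + b * v t ^ 2 with hV_def
  have hVnonneg : ∀ t, 0 ≤ V t := fun t => by positivity
  have hV : ∀ t ∈ Set.Ici (0 : ℝ),
      HasDerivWithinAt V
        (c * (2 * u t * (-(a * u t + b * v t))) +
          b * (2 * v t * (-(c * u t + d * v t)))) (Set.Ici 0) t := by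
    intro t ht
    have h1 : HasDerivWithinAt (fun t => u t ^ 2)
        (2 * u t * (-(a * u t + b * v t))) (Set.Ici 0) t := by
      exact ((hu t ht).pow 2).congr_deriv (by norm_num)
    have h2 : HasDerivWithinAt (fun t => v t ^ 2)
        (2 * v t * (-(c * u t + d * v t))) (Set.Ici 0) t := by
      exact ((hv t ht).pow 2).congr_deriv (by norm_num)
    exact (h1.const_mul c).add (h2.const_mul b)
  -- W = V * exp(k t) is antitone on Ici 0
  set W : ℝ → ℝ := fun t => V t * Real.exp (k * t) with hW_def
  have hW : ∀ t ∈ Set.Ici (0 : ℝ),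
      HasDerivWithinAt W
        ((c * (2 * u t * (-(a * u t + b * v t))) +
          b * (2 * v t * (-(c * u t + d * v t)))) * Real.exp (k * t) +
          V t * (k * Real.exp (k * t))) (Set.Ici 0) t := by
    intro t ht
    have hexp : HasDerivWithinAt (fun t => Real.exp (k * t))
        (k * Real.exp (k * t)) (Set.Ici 0) t := by
      have := (((hasDerivAt_id t).const_mul k).exp).hasDerivWithinAt
        (s := Set.Ici (0 : ℝ))
      simpa [mul_comm] using this
    exact (hV t ht).mul hexp
  -- the derivative of W is nonpositive
  have hW'le : ∀ t,
      (c * (2 * u t * (-(a * u t + b * v t))) +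
        b * (2 * v t * (-(c * u t + d * v t)))) * Real.exp (k * t) +
        V t * (k * Real.exp (k * t)) ≤ 0 := by
    intro t
    have hexp : 0 < Real.exp (k * t) := Real.exp_pos _
    have key : 0 ≤ (2 * a - k) * c * (u t) ^ 2 + 4 * b * c * (u t * v t) +
        (2 * d - k) * b * (v t) ^ 2 := by
      apply quad_nonneg
      · have : k < a := by
          rw [hk]
          rw [div_lt_iff₀ (by linarith)]
          nlinarith
        nlinarith
      · -- (4bc)² ≤ 4 * ((2a-k)c) * ((2d-k)b)
        have h1 : (2 * a - k) * (2 * d - k) = 2 * (a * d) + 2 * (b * c) + k ^ 2 := by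
          have : k * (a + d) = a * d - b * c := hkeq
          nlinarith [this]
        nlinarith [sq_nonneg k, mul_pos hb hc]
    have : (c * (2 * u t * (-(a * u t + b * v t))) +
        b * (2 * v t * (-(c * u t + d * v t)))) + V t * k ≤ 0 := by
      simp only [hV_def]
      nlinarith [key]
    calc (c * (2 * u t * (-(a * u t + b * v t))) +
        b * (2 * v t * (-(c * u t + d * v t)))) * Real.exp (k * t) +
        V t * (k * Real.exp (k * t))
        = ((c * (2 * u t * (-(a * u t + b * v t))) +
          b * (2 * v t * (-(c * u t + d * v t)))) + V t * k) * Real.exp (k * t) := by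
          ring
      _ ≤ 0 := mul_nonpos_of_nonpos_of_nonneg this hexp.le
  have hanti : AntitoneOn W (Set.Ici 0) := by
    apply antitoneOn_of_hasDerivWithinAt_nonpos (convex_Ici 0)
    · exact fun t ht => (hW t ht).continuousWithinAt
    · intro t ht
      rw [interior_Ici] at ht ⊢
      exact (hW t (Set.mem_Ici.mpr (le_of_lt ht))).mono (Set.Ioi_subset_Ici le_rfl)
    · intro t ht
      exact hW'le t
  -- V t ≤ V 0 * exp (-k t) for t ≥ 0
  have hVbound : ∀ t ∈ Set.Ici (0 : ℝ), V t ≤ V 0 * Real.exp (-(k * t)) := by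
    intro t ht
    have h := hanti (Set.self_mem_Ici) ht ht
    simp only [hW_def, mul_zero, Real.exp_zero, mul_one] at h
    have hexp : 0 < Real.exp (k * t) := Real.exp_pos _
    rw [Real.exp_neg, ← div_eq_mul_inv, le_div_iff₀ hexp]
    exact h
  -- V → 0
  have hVtendsto : Tendsto V atTop (𝓝 0) := by
    have h1 : Tendsto (fun t : ℝ => k * t) atTop atTop :=
      Tendsto.const_mul_atTop hkpos tendsto_id
    have h2 : Tendsto (fun t : ℝ => Real.exp (-(k * t))) atTop (𝓝 0) :=
      Real.tendsto_exp_atBot.comp (tendsto_neg_atBot_iff.mpr h1)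
    have hlim : Tendsto (fun t => V 0 * Real.exp (-(k * t))) atTop (𝓝 0) := by
      simpa using h2.const_mul (V 0)
    refine tendsto_of_tendsto_of_tendsto_of_le_of_le' tendsto_const_nhds hlim ?_ ?_
    · exact Eventually.of_forall hVnonneg
    · filter_upwards [eventually_ge_atTop (0 : ℝ)] with t ht
      exact hVbound t ht
  -- u → 0 and v → 0
  have sq_tendsto : ∀ (w : ℝ → ℝ) (e : ℝ), 0 < e → (∀ t, e * w t ^ 2 ≤ V t) →
      Tendsto w atTop (𝓝 0) := by
    intro w e he hle
    have hsq : Tendsto (fun t => w t ^ 2) atTop (𝓝 0) := by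
      have hlim : Tendsto (fun t => V t / e) atTop (𝓝 0) := by
        simpa using hVtendsto.div_const e
      refine tendsto_of_tendsto_of_tendsto_of_le_of_le tendsto_const_nhds hlim
        (fun t => sq_nonneg _) (fun t => ?_)
      rw [le_div_iff₀ he]
      linarith [hle t]
    have habs : Tendsto (fun t => |w t|) atTop (𝓝 0) := by
      have h := (Real.continuous_sqrt.tendsto 0).comp hsq
      rw [Real.sqrt_zero] at h
      refine h.congr fun t => ?_
      simp [Function.comp, Real.sqrt_sq_eq_abs]
    exact tendsto_zero_iff_abs_tendsto_zero _ |>.mpr habs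
  have hu0 : Tendsto u atTop (𝓝 0) := by
    refine sq_tendsto u c hc fun t => ?_
    show c * u t ^ 2 ≤ c * u t ^ 2 + b * v t ^ 2
    have : 0 ≤ b * v t ^ 2 := by positivity
    linarith
  have hv0 : Tendsto v atTop (𝓝 0) := by
    refine sq_tendsto v b hb fun t => ?_
    show b * v t ^ 2 ≤ c * u t ^ 2 + b * v t ^ 2
    have : 0 ≤ c * u t ^ 2 := by positivity
    linarith
  -- conclude
  have hxinv : Tendsto (fun t => (x t)⁻¹) atTop (𝓝 X₀) := by
    have : Tendsto (fun t => u t + X₀) atTop (𝓝 (0 + X₀)) := hu0.add_const X₀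
    simpa [hu_def] using this
  have hyinv : Tendsto (fun t => (y t)⁻¹) atTop (𝓝 Y₀) := by
    have : Tendsto (fun t => v t + Y₀) atTop (𝓝 (0 + Y₀)) := hv0.add_const Y₀
    simpa [hv_def] using this
  constructor
  · have h1 : Tendsto (fun t => ((x t)⁻¹)⁻¹) atTop (𝓝 X₀⁻¹) := hxinv.inv₀ hX₀pos.ne'
    have h2 : Tendsto x atTop (𝓝 X₀⁻¹) := by
      refine h1.congr' ?_
      filter_upwards [eventually_ge_atTop (0 : ℝ)] with t ht
      exact inv_inv (x t)
    have : X₀⁻¹ = (a * d - b * c) / (d - b) := by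
      rw [hX₀, inv_div, hD]
    rwa [this] at h2
  · have h1 : Tendsto (fun t => ((y t)⁻¹)⁻¹) atTop (𝓝 Y₀⁻¹) := hyinv.inv₀ hY₀pos.ne'
    have h2 : Tendsto y atTop (𝓝 Y₀⁻¹) := by
      refine h1.congr' ?_
      filter_upwards [eventually_ge_atTop (0 : ℝ)] with t ht
      exact inv_inv (y t)
    have : Y₀⁻¹ = (a * d - b * c) / (a - c) := by
      rw [hY₀, inv_div, hD]
    rwa [this] at h2
end

section
/- Let f : ℝ × ℝ → ℝ be continuous with three continuous partial derivatives in the second variable, and suppose f(t, 0) = 0 for all t ∈ ℝ and ∂³f/∂x³(t, x) > 0 for all t ∈ ℝ and x > 0. Then for all t ∈ ℝ and all x > 0, Q(t, x) := 2 f(t, x) − 2x ∂f/∂x(t, x) + x² ∂²f/∂x²(t, x) > 0. -/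
/-- If `f(t, 0) = 0` and `f_xxx(t, x) > 0` for `x > 0`, then
`Q(t, x) = 2f − 2x f_x + x² f_xx > 0` for all `x > 0`. -/
theorem Q_positive
    (f fx fxx fxxx : ℝ → ℝ → ℝ)
    (hf_cont : Continuous fun p : ℝ × ℝ => f p.1 p.2)
    (hfx_cont : Continuous fun p : ℝ × ℝ => fx p.1 p.2)
    (hfxx_cont : Continuous fun p : ℝ × ℝ => fxx p.1 p.2)
    (hfxxx_cont : Continuous fun p : ℝ × ℝ => fxxx p.1 p.2)
    (hfx : ∀ t x : ℝ, HasDerivAt (f t) (fx t x) x)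
    (hfxx : ∀ t x : ℝ, HasDerivAt (fx t) (fxx t x) x)
    (hfxxx : ∀ t x : ℝ, HasDerivAt (fxx t) (fxxx t x) x)
    (hf0 : ∀ t : ℝ, f t 0 = 0)
    (hpos : ∀ t : ℝ, ∀ x : ℝ, 0 < x → 0 < fxxx t x) :
    ∀ t : ℝ, ∀ x : ℝ, 0 < x →
      0 < 2 * f t x - 2 * x * fx t x + x ^ 2 * fxx t x := by
  intro t x hx
  set Q : ℝ → ℝ := fun y => 2 * f t y - 2 * y * fx t y + y ^ 2 * fxx t y with hQ
  have hQ' : ∀ y : ℝ, HasDerivAt Q (y ^ 2 * fxxx t y) y := by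
    intro y
    have h1 : HasDerivAt (fun y => 2 * f t y) (2 * fx t y) y :=
      (hfx t y).const_mul 2
    have h2 : HasDerivAt (fun y => 2 * y * fx t y)
        (2 * fx t y + 2 * y * fxx t y) y := by
      have := (((hasDerivAt_id y).const_mul 2).mul (hfxx t y))
      exact this.congr_deriv (by simp only [id, mul_one])
    have h3 : HasDerivAt (fun y => y ^ 2 * fxx t y)
        (2 * y * fxx t y + y ^ 2 * fxxx t y) y := by
      have hp : HasDerivAt (fun y : ℝ => y ^ 2) (2 * y) y := by
        simpa using hasDerivAt_pow 2 y
      have := hp.mul (hfxxx t y)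
      exact this
    have := (h1.sub h2).add h3
    exact this.congr_deriv (by ring)
  have hmono : StrictMonoOn Q (Set.Ici (0 : ℝ)) := by
    apply strictMonoOn_of_deriv_pos (convex_Ici 0)
    · exact fun y _ => (hQ' y).continuousAt.continuousWithinAt
    · intro y hy
      rw [interior_Ici] at hy
      rw [(hQ' y).deriv]
      exact mul_pos (pow_pos hy 2) (hpos t y hy)
  have hQ0 : Q 0 = 0 := by simp [hQ, hf0 t]
  have := hmono (Set.self_mem_Ici) (Set.mem_Ici.mpr hx.le) hx
  rw [hQ0] at this
  exact this
end

section
/- Let p > 0 and let g : ℝ × ℝ → ℝ be continuous with two continuous partial derivatives in the second variable, satisfying g(t + p, y) = g(t, y) for all t ∈ ℝ and y > 0, and ∂²g/∂y²(t, y) > 0 for all t ∈ ℝ and y > 0 (or the opposite strict inequality for all such t, y). Then the equation y'(t) = g(t, y(t)) has at most two positive p-periodic solutions; that is, there are at most two differentiable functions y : ℝ → ℝ with y(t) > 0 and y(t + p) = y(t) for all t that satisfy y'(t) = g(t, y(t)) for all t. -/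
open Set Real

/-- Two solutions of the same ODE that differ somewhere never meet. -/
lemma never_eq_of_ne (g gy : ℝ → ℝ → ℝ)
    (hgy_cont : Continuous fun q : ℝ × ℝ => gy q.1 q.2)
    (hgy : ∀ t y : ℝ, HasDerivAt (g t) (gy t y) y)
    (y z : ℝ → ℝ)
    (hy' : ∀ t, HasDerivAt y (g t (y t)) t)
    (hz' : ∀ t, HasDerivAt z (g t (z t)) t)
    (hne : y ≠ z) : ∀ t, y t ≠ z t := by
  have hycont : Continuous y := by
    rw [continuous_iff_continuousAt]; exact fun t => (hy' t).continuousAt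
  have hzcont : Continuous z := by
    rw [continuous_iff_continuousAt]; exact fun t => (hz' t).continuousAt
  intro t ht
  apply hne
  set S : Set ℝ := {t | y t = z t} with hSdef
  have hS_closed : IsClosed S := isClosed_eq hycont hzcont
  have hS_open : IsOpen S := by
    rw [isOpen_iff_mem_nhds]
    intro t₀ ht₀
    set a : ℝ := t₀ - 1 with ha_def
    set b : ℝ := t₀ + 1 with hb_def
    have hab : a ≤ b := by simp only [ha_def, hb_def]; linarith
    obtain ⟨tm, htm, hmax⟩ := (isCompact_Icc (a := a) (b := b)).exists_isMaxOn
      (nonempty_Icc.mpr hab) ((hycont.abs.max hzcont.abs).continuousOn)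
    set R : ℝ := max |y tm| |z tm| with hRdef
    have hRy : ∀ s ∈ Icc a b, y s ∈ Icc (-R) R := by
      intro s hs
      have h1 : |y s| ≤ R := le_trans (le_max_left _ _) (hmax hs)
      exact abs_le.mp h1 |>.elim fun h1 h2 => ⟨h1, h2⟩
    have hRz : ∀ s ∈ Icc a b, z s ∈ Icc (-R) R := by
      intro s hs
      have h1 : |z s| ≤ R := le_trans (le_max_right _ _) (hmax hs)
      exact abs_le.mp h1 |>.elim fun h1 h2 => ⟨h1, h2⟩
    obtain ⟨C, hC⟩ := ((isCompact_Icc (a := a) (b := b)).prod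
      (isCompact_Icc (a := -R) (b := R))).exists_bound_of_continuousOn hgy_cont.continuousOn
    set sset : ℝ → Set ℝ := fun s => if s ∈ Icc a b then Icc (-R) R else (∅ : Set ℝ)
      with hsset_def
    have hv : ∀ s : ℝ, LipschitzOnWith C.toNNReal (g s) (sset s) := by
      intro s
      by_cases hs : s ∈ Icc a b
      · simp only [hsset_def, if_pos hs]
        rw [lipschitzOnWith_iff_dist_le_mul]
        have key : ∀ u v : ℝ, u ∈ Icc (-R) R → v ∈ Icc (-R) R → u < v →
            |g s v - g s u| ≤ C * (v - u) := by
          intro u v hu hv huv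
          obtain ⟨ξ, hξ, hslope⟩ := exists_hasDerivAt_eq_slope (g s) (gy s) huv
            (fun x _ => (hgy s x).continuousAt.continuousWithinAt)
            (fun x _ => hgy s x)
          have hξmem : ξ ∈ Icc (-R) R :=
            ⟨le_trans hu.1 (le_of_lt hξ.1), le_trans (le_of_lt hξ.2) hv.2⟩
          have hbound : |gy s ξ| ≤ C := hC (s, ξ) ⟨hs, hξmem⟩
          have : g s v - g s u = gy s ξ * (v - u) := by
            rw [hslope, div_mul_cancel₀ _ (sub_ne_zero.mpr huv.ne')]
          rw [this, abs_mul, abs_of_pos (by linarith : (0:ℝ) < v - u)]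
          exact mul_le_mul_of_nonneg_right hbound (by linarith)
        intro u hu v hv
        rcases lt_trichotomy u v with h | h | h
        · rw [Real.dist_eq, Real.dist_eq, abs_sub_comm (g s u), abs_sub_comm u]
          calc |g s v - g s u| ≤ C * (v - u) := key u v hu hv h
            _ ≤ ↑C.toNNReal * |v - u| := by
                rw [abs_of_pos (by linarith : (0:ℝ) < v - u)]
                exact mul_le_mul_of_nonneg_right (Real.le_coe_toNNReal C) (by linarith)
        · simp [h]
        · rw [Real.dist_eq, Real.dist_eq]
          calc |g s u - g s v| ≤ C * (u - v) := key v u hv hu h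
            _ ≤ ↑C.toNNReal * |u - v| := by
                rw [abs_of_pos (by linarith : (0:ℝ) < u - v)]
                exact mul_le_mul_of_nonneg_right (Real.le_coe_toNNReal C) (by linarith)
      · simp only [hsset_def, if_neg hs]
        exact lipschitzOnWith_empty _ _
    have ht₀' : t₀ ∈ Ioo a b := by
      simp only [ha_def, hb_def, mem_Ioo]; constructor <;> linarith
    have heqon : EqOn y z (Ioo a b) := by
      apply ODE_solution_unique_of_mem_Ioo (fun s _ => hv s) ht₀'
      · intro s hs
        refine ⟨hy' s, ?_⟩
        simp only [hsset_def, if_pos (Ioo_subset_Icc_self hs)]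
        exact hRy s (Ioo_subset_Icc_self hs)
      · intro s hs
        refine ⟨hz' s, ?_⟩
        simp only [hsset_def, if_pos (Ioo_subset_Icc_self hs)]
        exact hRz s (Ioo_subset_Icc_self hs)
      · exact ht₀
    have : Ioo a b ∈ nhds t₀ := Ioo_mem_nhds ht₀'.1 ht₀'.2
    exact Filter.mem_of_superset this fun s hs => heqon hs
  have hSuniv : S = univ := by
    have : IsClopen S := ⟨hS_closed, hS_open⟩
    exact this.eq_univ ⟨t, ht⟩
  funext s
  have : s ∈ S := hSuniv ▸ mem_univ s
  exact this

/-- Two continuous functions that never agree are strictly ordered. -/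
lemma order_of_never_eq (y z : ℝ → ℝ) (hy : Continuous y) (hz : Continuous z)
    (h : ∀ t, y t ≠ z t) : (∀ t, y t < z t) ∨ (∀ t, z t < y t) := by
  by_contra hcon
  push_neg at hcon
  obtain ⟨⟨t₁, ht₁⟩, ⟨t₂, ht₂⟩⟩ := hcon
  have h₁ : z t₁ < y t₁ := lt_of_le_of_ne ht₁ fun he => h t₁ he.symm
  have h₂ : y t₂ < z t₂ := lt_of_le_of_ne ht₂ fun he => h t₂ he
  have hc : Continuous fun t => y t - z t := hy.sub hz
  have : (0:ℝ) ∈ Icc (y t₂ - z t₂) (y t₁ - z t₁) := ⟨by linarith, by linarith⟩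
  obtain ⟨c, hc0⟩ := intermediate_value_univ t₂ t₁ hc this
  have hc0' : y c - z c = 0 := hc0
  exact h c (by linarith : y c = z c)

/-- The integral of the slope between two ordered periodic solutions vanishes. -/
lemma integral_slope_zero (p : ℝ) (g : ℝ → ℝ → ℝ)
    (hg_cont : Continuous fun q : ℝ × ℝ => g q.1 q.2)
    (a b : ℝ → ℝ)
    (ha' : ∀ t, HasDerivAt a (g t (a t)) t)
    (hb' : ∀ t, HasDerivAt b (g t (b t)) t)
    (ha_per : ∀ t, a (t + p) = a t) (hb_per : ∀ t, b (t + p) = b t)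
    (hlt : ∀ t, a t < b t) :
    ∫ t in (0:ℝ)..p, (g t (b t) - g t (a t)) / (b t - a t) = 0 := by
  have hacont : Continuous a := by
    rw [continuous_iff_continuousAt]; exact fun t => (ha' t).continuousAt
  have hbcont : Continuous b := by
    rw [continuous_iff_continuousAt]; exact fun t => (hb' t).continuousAt
  have hga : Continuous fun t => g t (a t) := hg_cont.comp (continuous_id.prodMk hacont)
  have hgb : Continuous fun t => g t (b t) := hg_cont.comp (continuous_id.prodMk hbcont)
  have hne : ∀ t, b t - a t ≠ 0 := fun t => sub_ne_zero.mpr (hlt t).ne'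
  have hfc : Continuous fun t => (g t (b t) - g t (a t)) / (b t - a t) :=
    (hgb.sub hga).div (hbcont.sub hacont) hne
  have hF : ∀ t : ℝ, HasDerivAt (fun s => Real.log (b s - a s))
      ((g t (b t) - g t (a t)) / (b t - a t)) t := by
    intro t
    have hu : HasDerivAt (fun s => b s - a s) (g t (b t) - g t (a t)) t :=
      (hb' t).sub (ha' t)
    have := (Real.hasDerivAt_log (hne t)).comp t hu
    rw [div_eq_inv_mul]
    exact this
  have hint := intervalIntegral.integral_eq_sub_of_hasDerivAt
    (f := fun s => Real.log (b s - a s)) (fun t _ => hF t)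
    (hfc.intervalIntegrable 0 p)
  rw [hint]
  show Real.log (b p - a p) - Real.log (b 0 - a 0) = 0
  have hbp : b p = b 0 := by have := hb_per 0; rwa [zero_add] at this
  have hap : a p = a 0 := by have := ha_per 0; rwa [zero_add] at this
  rw [hbp, hap, sub_self]

/-- Strict comparison of slopes from the sign of the second derivative. -/
lemma slope_lt_slope (t : ℝ) (g gy gyy : ℝ → ℝ → ℝ)
    (hgy : ∀ y : ℝ, HasDerivAt (g t) (gy t y) y)
    (hgyy : ∀ y : ℝ, HasDerivAt (gy t) (gyy t y) y)
    (hpos : ∀ y : ℝ, 0 < y → 0 < gyy t y)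
    (u v w : ℝ) (hu : 0 < u) (huv : u < v) (hvw : v < w) :
    (g t v - g t u) / (v - u) < (g t w - g t v) / (w - v) := by
  obtain ⟨ξ, hξ, hξs⟩ := exists_hasDerivAt_eq_slope (g t) (gy t) huv
    (fun x _ => (hgy x).continuousAt.continuousWithinAt) (fun x _ => hgy x)
  obtain ⟨η, hη, hηs⟩ := exists_hasDerivAt_eq_slope (g t) (gy t) hvw
    (fun x _ => (hgy x).continuousAt.continuousWithinAt) (fun x _ => hgy x)
  rw [← hξs, ← hηs]
  have hξη : ξ < η := lt_trans hξ.2 hη.1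
  obtain ⟨ζ, hζ, hζs⟩ := exists_hasDerivAt_eq_slope (gy t) (gyy t) hξη
    (fun x _ => (hgyy x).continuousAt.continuousWithinAt) (fun x _ => hgyy x)
  have hζpos : 0 < ζ := by
    have : u < ζ := by linarith [hξ.1, hζ.1]
    linarith
  have := hpos ζ hζpos
  rw [hζs] at this
  have hd : 0 < η - ξ := by linarith
  have := (div_pos_iff.mp this)
  rcases this with ⟨h1, _⟩ | ⟨_, h2⟩
  · linarith
  · linarith

/-- Core contradiction: three pointwise-ordered positive periodic solutions
are impossible. -/
lemma no_three_ordered (p : ℝ) (hp : 0 < p) (g gy gyy : ℝ → ℝ → ℝ)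
    (hg_cont : Continuous fun q : ℝ × ℝ => g q.1 q.2)
    (hgy : ∀ t y : ℝ, HasDerivAt (g t) (gy t y) y)
    (hgyy : ∀ t y : ℝ, HasDerivAt (gy t) (gyy t y) y)
    (hconv : (∀ t : ℝ, ∀ y : ℝ, 0 < y → 0 < gyy t y) ∨
             (∀ t : ℝ, ∀ y : ℝ, 0 < y → gyy t y < 0))
    (a b c : ℝ → ℝ)
    (ha_pos : ∀ t, 0 < a t)
    (ha_per : ∀ t, a (t + p) = a t) (hb_per : ∀ t, b (t + p) = b t)
    (hc_per : ∀ t, c (t + p) = c t)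
    (ha' : ∀ t, HasDerivAt a (g t (a t)) t)
    (hb' : ∀ t, HasDerivAt b (g t (b t)) t)
    (hc' : ∀ t, HasDerivAt c (g t (c t)) t)
    (hab : ∀ t, a t < b t) (hbc : ∀ t, b t < c t) : False := by
  have hacont : Continuous a := by
    rw [continuous_iff_continuousAt]; exact fun t => (ha' t).continuousAt
  have hbcont : Continuous b := by
    rw [continuous_iff_continuousAt]; exact fun t => (hb' t).continuousAt
  have hccont : Continuous c := by
    rw [continuous_iff_continuousAt]; exact fun t => (hc' t).continuousAt
  have hga : Continuous fun t => g t (a t) := hg_cont.comp (continuous_id.prodMk hacont)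
  have hgb : Continuous fun t => g t (b t) := hg_cont.comp (continuous_id.prodMk hbcont)
  have hgc : Continuous fun t => g t (c t) := hg_cont.comp (continuous_id.prodMk hccont)
  have hne1 : ∀ t, b t - a t ≠ 0 := fun t => sub_ne_zero.mpr (hab t).ne'
  have hne2 : ∀ t, c t - b t ≠ 0 := fun t => sub_ne_zero.mpr (hbc t).ne'
  set f1 : ℝ → ℝ := fun t => (g t (b t) - g t (a t)) / (b t - a t) with hf1
  set f2 : ℝ → ℝ := fun t => (g t (c t) - g t (b t)) / (c t - b t) with hf2
  have hf1c : Continuous f1 := (hgb.sub hga).div (hbcont.sub hacont) hne1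
  have hf2c : Continuous f2 := (hgc.sub hgb).div (hccont.sub hbcont) hne2
  have hI1 : ∫ t in (0:ℝ)..p, f1 t = 0 :=
    integral_slope_zero p g hg_cont a b ha' hb' ha_per hb_per hab
  have hI2 : ∫ t in (0:ℝ)..p, f2 t = 0 :=
    integral_slope_zero p g hg_cont b c hb' hc' hb_per hc_per hbc
  have hI : ∫ t in (0:ℝ)..p, (f2 t - f1 t) = 0 := by
    rw [intervalIntegral.integral_sub (hf2c.intervalIntegrable 0 p)
      (hf1c.intervalIntegrable 0 p), hI1, hI2, sub_zero]
  rcases hconv with hpos | hneg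
  · have hlt : ∀ t, f1 t < f2 t := fun t =>
      slope_lt_slope t g gy gyy (hgy t) (hgyy t) (hpos t) (a t) (b t) (c t)
        (ha_pos t) (hab t) (hbc t)
    have : 0 < ∫ t in (0:ℝ)..p, (f2 t - f1 t) :=
      intervalIntegral.intervalIntegral_pos_of_pos
        ((hf2c.sub hf1c).intervalIntegrable 0 p)
        (fun t => sub_pos.mpr (hlt t)) hp
    linarith
  · have hlt : ∀ t, f2 t < f1 t := by
      intro t
      have key := slope_lt_slope t (fun s y => -g s y) (fun s y => -gy s y)
        (fun s y => -gyy s y) (fun y => (hgy t y).neg) (fun y => (hgyy t y).neg)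
        (fun y hy => neg_pos.mpr (hneg t y hy)) (a t) (b t) (c t)
        (ha_pos t) (hab t) (hbc t)
      have e1 : (-g t (b t) - -g t (a t)) / (b t - a t)
          = -((g t (b t) - g t (a t)) / (b t - a t)) := by ring
      have e2 : (-g t (c t) - -g t (b t)) / (c t - b t)
          = -((g t (c t) - g t (b t)) / (c t - b t)) := by ring
      rw [e1, e2] at key
      simp only [hf1, hf2]
      linarith
    have : 0 < ∫ t in (0:ℝ)..p, (f1 t - f2 t) := by
      apply intervalIntegral.intervalIntegral_pos_of_pos
        ((hf1c.sub hf2c).intervalIntegrable 0 p)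
        (fun t => sub_pos.mpr (hlt t)) hp
    have hI' : ∫ t in (0:ℝ)..p, (f1 t - f2 t) = 0 := by
      rw [intervalIntegral.integral_sub (hf1c.intervalIntegrable 0 p)
        (hf2c.intervalIntegrable 0 p), hI1, hI2, sub_zero]
    linarith



/-- A first-order periodic equation `y' = g(t, y)` with `g` strictly convex
(or strictly concave) in `y` on `y > 0` has at most two positive `p`-periodic
solutions. -/
theorem at_most_two_positive_periodic_solutions
    (p : ℝ) (hp : 0 < p)
    (g gy gyy : ℝ → ℝ → ℝ)
    (hg_cont : Continuous fun q : ℝ × ℝ => g q.1 q.2)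
    (hgy_cont : Continuous fun q : ℝ × ℝ => gy q.1 q.2)
    (hgyy_cont : Continuous fun q : ℝ × ℝ => gyy q.1 q.2)
    (hgy : ∀ t y : ℝ, HasDerivAt (g t) (gy t y) y)
    (hgyy : ∀ t y : ℝ, HasDerivAt (gy t) (gyy t y) y)
    (hper : ∀ t : ℝ, ∀ y : ℝ, 0 < y → g (t + p) y = g t y)
    (hconv : (∀ t : ℝ, ∀ y : ℝ, 0 < y → 0 < gyy t y) ∨
             (∀ t : ℝ, ∀ y : ℝ, 0 < y → gyy t y < 0)) :
    ∀ y₁ y₂ y₃ : ℝ → ℝ,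
      ((∀ t, 0 < y₁ t) ∧ (∀ t, y₁ (t + p) = y₁ t) ∧
        ∀ t, HasDerivAt y₁ (g t (y₁ t)) t) →
      ((∀ t, 0 < y₂ t) ∧ (∀ t, y₂ (t + p) = y₂ t) ∧
        ∀ t, HasDerivAt y₂ (g t (y₂ t)) t) →
      ((∀ t, 0 < y₃ t) ∧ (∀ t, y₃ (t + p) = y₃ t) ∧
        ∀ t, HasDerivAt y₃ (g t (y₃ t)) t) →
      y₁ = y₂ ∨ y₁ = y₃ ∨ y₂ = y₃ := by
  rintro y₁ y₂ y₃ ⟨h1pos, h1per, h1'⟩ ⟨h2pos, h2per, h2'⟩ ⟨h3pos, h3per, h3'⟩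
  by_contra hcon
  push_neg at hcon
  obtain ⟨hne12, hne13, hne23⟩ := hcon
  have hc1 : Continuous y₁ := by
    rw [continuous_iff_continuousAt]; exact fun t => (h1' t).continuousAt
  have hc2 : Continuous y₂ := by
    rw [continuous_iff_continuousAt]; exact fun t => (h2' t).continuousAt
  have hc3 : Continuous y₃ := by
    rw [continuous_iff_continuousAt]; exact fun t => (h3' t).continuousAt
  have o12 := order_of_never_eq y₁ y₂ hc1 hc2
    (never_eq_of_ne g gy hgy_cont hgy y₁ y₂ h1' h2' hne12)
  have o13 := order_of_never_eq y₁ y₃ hc1 hc3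
    (never_eq_of_ne g gy hgy_cont hgy y₁ y₃ h1' h3' hne13)
  have o23 := order_of_never_eq y₂ y₃ hc2 hc3
    (never_eq_of_ne g gy hgy_cont hgy y₂ y₃ h2' h3' hne23)
  have N := no_three_ordered p hp g gy gyy hg_cont hgy hgyy hconv
  rcases o12 with o12 | o12 <;> rcases o13 with o13 | o13 <;> rcases o23 with o23 | o23
  · exact N y₁ y₂ y₃ h1pos h1per h2per h3per h1' h2' h3' o12 o23
  · exact N y₁ y₃ y₂ h1pos h1per h3per h2per h1' h3' h2' o13 o23
  · linarith [o12 0, o13 0, o23 0]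
  · exact N y₃ y₁ y₂ h3pos h3per h1per h2per h3' h1' h2' o13 o12
  · exact N y₂ y₁ y₃ h2pos h2per h1per h3per h2' h1' h3' o12 o13
  · linarith [o12 0, o13 0, o23 0]
  · exact N y₂ y₃ y₁ h2pos h2per h3per h1per h2' h3' h1' o23 o13
  · exact N y₃ y₂ y₁ h3pos h3per h2per h1per h3' h2' h1' o23 o12
end

section
/- Let p > 0 and let f : ℝ × ℝ → ℝ be continuous with three continuous partial derivatives in the second variable, satisfying f(t, 0) = 0 for all t ∈ ℝ, f(t + p, x) = f(t, x) for all t, x ∈ ℝ, and ∂³f/∂x³(t, x) > 0 for all t ∈ ℝ and x > 0. Then the equation x'(t) = f(t, x(t)) has at most two positive p-periodic solutions; that is, there are at most two differentiable functions x : ℝ → ℝ with x(t) > 0 and x(t + p) = x(t) for all t that satisfy x'(t) = f(t, x(t)) for all t. -/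
open Set intervalIntegral MeasureTheory


/-- One-variable slope lemma: if `f 0 = 0` and `f''' > 0` on positives, then
`g = f / x` has strictly increasing divided differences on `(0, ∞)`. -/
lemma slope_aux (f fx fxx fxxx : ℝ → ℝ)
    (hfx : ∀ x, HasDerivAt f (fx x) x) (hfxx : ∀ x, HasDerivAt fx (fxx x) x)
    (hfxxx : ∀ x, HasDerivAt fxx (fxxx x) x)
    (hf0 : f 0 = 0) (hpos : ∀ x, 0 < x → 0 < fxxx x)
    {a b c : ℝ} (ha : 0 < a) (hab : a < b) (hbc : b < c) :
    (f b / b - f a / a) / (b - a) < (f c / c - f b / b) / (c - b) := by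
  have hfc : Continuous f := (Differentiable.continuous fun x => (hfx x).differentiableAt)
  have hfxc : Continuous fx := (Differentiable.continuous fun x => (hfxx x).differentiableAt)
  have hfxxc : Continuous fxx := (Differentiable.continuous fun x => (hfxxx x).differentiableAt)
  set g : ℝ → ℝ := fun x => f x / x with hg
  set gx : ℝ → ℝ := fun x => fx x / x - f x / x ^ 2 with hgx
  set φ : ℝ → ℝ := fun x => fxx x * x ^ 2 - 2 * fx x * x + 2 * f x with hφ
  -- derivative of φ
  have hφ' : ∀ x : ℝ, HasDerivAt φ (fxxx x * x ^ 2) x := by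
    intro x
    have h1 : HasDerivAt (fun x => fxx x * x ^ 2)
        (fxxx x * x ^ 2 + fxx x * (2 * x)) x := by
      simpa using (hfxxx x).fun_mul ((hasDerivAt_pow 2 x))
    have h2 : HasDerivAt (fun x => 2 * fx x * x)
        ((2 * fxx x) * x + 2 * fx x * 1) x := by
      exact (((hfxx x).const_mul 2)).mul (hasDerivAt_id x)
    have h3 : HasDerivAt (fun x => 2 * f x) (2 * fx x) x := (hfx x).const_mul 2
    have := (h1.fun_sub h2).fun_add h3
    refine this.congr_deriv ?_
    ring
  have hφc : Continuous φ := by continuity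
  have hφmono : StrictMonoOn φ (Ici (0:ℝ)) := by
    apply strictMonoOn_of_deriv_pos (convex_Ici 0) hφc.continuousOn
    intro x hx
    rw [interior_Ici] at hx
    rw [(hφ' x).deriv]
    exact mul_pos (hpos x hx) (pow_pos hx 2)
  have hφ0 : φ 0 = 0 := by simp [hφ, hf0]
  have hφpos : ∀ x : ℝ, 0 < x → 0 < φ x := by
    intro x hx
    have := hφmono (self_mem_Ici) (le_of_lt hx) hx
    rwa [hφ0] at this
  -- derivative of g
  have hgd : ∀ x : ℝ, x ≠ 0 → HasDerivAt g (gx x) x := by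
    intro x hx
    have := (hfx x).fun_div (hasDerivAt_id x) hx
    refine this.congr_deriv ?_
    simp only [hgx, id]
    field_simp
  -- derivative of gx
  have hgxd : ∀ x : ℝ, x ≠ 0 → HasDerivAt gx (φ x / x ^ 3) x := by
    intro x hx
    have h1 : HasDerivAt (fun x => fx x / x) ((fxx x * x - fx x * 1) / x ^ 2) x :=
      (hfxx x).div (hasDerivAt_id x) hx
    have h2 : HasDerivAt (fun x => f x / x ^ 2)
        ((fx x * x ^ 2 - f x * (2 * x)) / (x ^ 2) ^ 2) x := by
      have := (hfx x).fun_div (hasDerivAt_pow 2 x) (pow_ne_zero 2 hx)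
      simpa using this
    have := h1.fun_sub h2
    refine this.congr_deriv ?_
    simp only [hφ]
    field_simp
    ring
  -- gx strictly monotone on Ioi 0
  have hgxc : ContinuousOn gx (Ioi (0:ℝ)) := by
    apply ContinuousOn.sub
    · exact (hfxc.continuousOn).div continuousOn_id (fun x hx => ne_of_gt hx)
    · exact (hfc.continuousOn).div (continuousOn_pow 2)
        (fun x hx => pow_ne_zero 2 (ne_of_gt hx))
  have hgxmono : StrictMonoOn gx (Ioi (0:ℝ)) := by
    apply strictMonoOn_of_deriv_pos (convex_Ioi 0) hgxc
    intro x hx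
    rw [interior_Ioi] at hx
    rw [(hgxd x (ne_of_gt hx)).deriv]
    exact div_pos (hφpos x hx) (pow_pos hx 3)
  -- MVT on both intervals
  have hgc : ∀ {l r : ℝ}, 0 < l → ContinuousOn g (Icc l r) := by
    intro l r hl
    exact (hfc.continuousOn).div continuousOn_id
      (fun x hx => ne_of_gt (lt_of_lt_of_le hl hx.1))
  obtain ⟨ξ₁, hξ₁, hs₁⟩ := exists_hasDerivAt_eq_slope g gx hab (hgc ha)
    (fun x hx => hgd x (ne_of_gt (lt_trans ha hx.1)))
  obtain ⟨ξ₂, hξ₂, hs₂⟩ := exists_hasDerivAt_eq_slope g gx hbc (hgc (lt_trans ha hab))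
    (fun x hx => hgd x (ne_of_gt (lt_trans (lt_trans ha hab) hx.1)))
  have hlt : gx ξ₁ < gx ξ₂ :=
    hgxmono (mem_Ioi.2 (lt_trans ha hξ₁.1)) (mem_Ioi.2 (lt_trans (lt_trans ha hab) hξ₂.1))
      (lt_trans hξ₁.2 hξ₂.1)
  rw [hs₁, hs₂] at hlt
  exact hlt


lemma ode_unique (f fx : ℝ → ℝ → ℝ)
    (hfx_cont : Continuous fun q : ℝ × ℝ => fx q.1 q.2)
    (hfx : ∀ t x, HasDerivAt (f t) (fx t x) x)
    (u v : ℝ → ℝ) (hu : ∀ t, HasDerivAt u (f t (u t)) t)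
    (hv : ∀ t, HasDerivAt v (f t (v t)) t)
    (t₀ : ℝ) (h0 : u t₀ = v t₀) : u = v := by
  have huc : Continuous u := Differentiable.continuous fun t => (hu t).differentiableAt
  have hvc : Continuous v := Differentiable.continuous fun t => (hv t).differentiableAt
  set c : ℝ → ℝ := fun t => ∫ s in (0:ℝ)..1, fx t (v t + s * (u t - v t)) with hc
  have hcc : Continuous c := by
    have huncurry : Continuous fun q : ℝ × ℝ => fx q.1 (v q.1 + q.2 * (u q.1 - v q.1)) := by
      exact hfx_cont.comp (continuous_fst.prodMk
        ((hvc.comp continuous_fst).add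
          (continuous_snd.mul ((huc.comp continuous_fst).sub (hvc.comp continuous_fst)))))
    exact intervalIntegral.continuous_parametric_intervalIntegral_of_continuous
      (f := fun t s => fx t (v t + s * (u t - v t))) (μ := volume) huncurry continuous_const
  have hkey : ∀ t, f t (u t) - f t (v t) = c t * (u t - v t) := by
    intro t
    have hderiv : ∀ s ∈ uIcc (0:ℝ) 1,
        HasDerivAt (fun s : ℝ => f t (v t + s * (u t - v t)))
          (fx t (v t + s * (u t - v t)) * (u t - v t)) s := by
      intro s _
      have h1 : HasDerivAt (fun s : ℝ => v t + s * (u t - v t)) (u t - v t) s := by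
        simpa using ((hasDerivAt_id s).mul_const (u t - v t)).const_add (v t)
      exact (hfx t _).comp s h1
    have hint : IntervalIntegrable
        (fun s : ℝ => fx t (v t + s * (u t - v t)) * (u t - v t)) volume 0 1 := by
      apply Continuous.intervalIntegrable
      exact (hfx_cont.comp (continuous_const.prodMk
        (continuous_const.add (continuous_id.mul continuous_const)))).mul continuous_const
    have := intervalIntegral.integral_eq_sub_of_hasDerivAt hderiv hint
    simp only [one_mul, zero_mul, add_zero] at this
    rw [intervalIntegral.integral_mul_const] at this
    have harg : v t + (u t - v t) = u t := by ring
    rw [harg] at this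
    rw [← this, hc]
  set C : ℝ → ℝ := fun t => ∫ s in t₀..t, c s with hC
  have hCd : ∀ t, HasDerivAt C (c t) t := fun t =>
    (hcc.integral_hasStrictDerivAt t₀ t).hasDerivAt
  set w : ℝ → ℝ := fun t => (u t - v t) * Real.exp (-C t) with hw
  have hwd : ∀ t, HasDerivAt w 0 t := by
    intro t
    have h1 : HasDerivAt (fun t => u t - v t) (c t * (u t - v t)) t := by
      have := (hu t).sub (hv t)
      rwa [hkey t] at this
    have h2 : HasDerivAt (fun t => Real.exp (-C t)) (Real.exp (-C t) * (-c t)) t := by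
      have := ((hCd t).neg).exp
      simpa [mul_comm] using this
    have := h1.fun_mul h2
    refine this.congr_deriv ?_
    ring
  have hwconst : ∀ t, w t = w t₀ := by
    intro t
    exact is_const_of_deriv_eq_zero (fun s => (hwd s).differentiableAt)
      (fun s => (hwd s).deriv) t t₀
  funext t
  have := hwconst t
  rw [hw] at this
  simp only [h0, sub_self, zero_mul] at this
  have hexp : Real.exp (-C t) ≠ 0 := Real.exp_ne_zero _
  have := mul_eq_zero.1 this
  rcases this with h | h
  · linarith [sub_eq_zero.1 (by linarith : u t - v t = 0)]
  · exact absurd h hexp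



lemma ode_lt (f fx : ℝ → ℝ → ℝ)
    (hfx_cont : Continuous fun q : ℝ × ℝ => fx q.1 q.2)
    (hfx : ∀ t x, HasDerivAt (f t) (fx t x) x)
    (u v : ℝ → ℝ) (hu : ∀ t, HasDerivAt u (f t (u t)) t)
    (hv : ∀ t, HasDerivAt v (f t (v t)) t)
    (h0 : u 0 < v 0) : ∀ t, u t < v t := by
  have huc : Continuous u := Differentiable.continuous fun t => (hu t).differentiableAt
  have hvc : Continuous v := Differentiable.continuous fun t => (hv t).differentiableAt
  intro t
  by_contra h
  push_neg at h
  have hex : ∃ s, u s = v s := by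
    set d : ℝ → ℝ := fun s => v s - u s with hd
    have hdc : ContinuousOn d (uIcc 0 t) := (hvc.sub huc).continuousOn
    have h0' : (0:ℝ) ∈ uIcc (d 0) (d t) := by
      rw [mem_uIcc]
      right
      constructor
      · simpa [hd] using sub_nonpos.2 h
      · simpa [hd] using sub_nonneg.2 h0.le
    obtain ⟨s, _, hs⟩ := intermediate_value_uIcc hdc h0'
    refine ⟨s, ?_⟩
    have : v s - u s = 0 := hs
    linarith [sub_eq_zero.1 this]
  obtain ⟨s, hs⟩ := hex
  have := ode_unique f fx hfx_cont hfx u v hu hv s hs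
  rw [this] at h0
  exact lt_irrefl _ h0

lemma integral_deriv_periodic (p : ℝ) (F r : ℝ → ℝ)
    (hF : ∀ t, HasDerivAt F (r t) t) (hr : Continuous r) (hper : F p = F 0) :
    ∫ t in (0:ℝ)..p, r t = 0 := by
  rw [intervalIntegral.integral_eq_sub_of_hasDerivAt (fun t _ => hF t)
    (hr.intervalIntegrable _ _), hper, sub_self]





lemma no_three (p : ℝ) (hp : 0 < p) (f fx fxx fxxx : ℝ → ℝ → ℝ)
    (hf_cont : Continuous fun q : ℝ × ℝ => f q.1 q.2)
    (hfx_cont : Continuous fun q : ℝ × ℝ => fx q.1 q.2)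
    (hfx : ∀ t x : ℝ, HasDerivAt (f t) (fx t x) x)
    (hfxx : ∀ t x : ℝ, HasDerivAt (fx t) (fxx t x) x)
    (hfxxx : ∀ t x : ℝ, HasDerivAt (fxx t) (fxxx t x) x)
    (hf0 : ∀ t : ℝ, f t 0 = 0)
    (hpos : ∀ t : ℝ, ∀ x : ℝ, 0 < x → 0 < fxxx t x)
    (u v w : ℝ → ℝ)
    (hu_pos : ∀ t, 0 < u t) (hu_per : ∀ t, u (t + p) = u t)
    (hu : ∀ t, HasDerivAt u (f t (u t)) t)
    (hv_pos : ∀ t, 0 < v t) (hv_per : ∀ t, v (t + p) = v t)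
    (hv : ∀ t, HasDerivAt v (f t (v t)) t)
    (hw_pos : ∀ t, 0 < w t) (hw_per : ∀ t, w (t + p) = w t)
    (hw : ∀ t, HasDerivAt w (f t (w t)) t)
    (huv : u 0 < v 0) (hvw : v 0 < w 0) : False := by
  have hUV : ∀ t, u t < v t := ode_lt f fx hfx_cont hfx u v hu hv huv
  have hVW : ∀ t, v t < w t := ode_lt f fx hfx_cont hfx v w hv hw hvw
  have huc : Continuous u := Differentiable.continuous fun t => (hu t).differentiableAt
  have hvc : Continuous v := Differentiable.continuous fun t => (hv t).differentiableAt
  have hwc : Continuous w := Differentiable.continuous fun t => (hw t).differentiableAt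
  have hfu : Continuous fun t => f t (u t) := hf_cont.comp (continuous_id.prodMk huc)
  have hfv : Continuous fun t => f t (v t) := hf_cont.comp (continuous_id.prodMk hvc)
  have hfw : Continuous fun t => f t (w t) := hf_cont.comp (continuous_id.prodMk hwc)
  set m₁ : ℝ → ℝ := fun t => (f t (v t) - f t (u t)) / (v t - u t) with hm₁
  set m₂ : ℝ → ℝ := fun t => (f t (w t) - f t (v t)) / (w t - v t) with hm₂
  set a₁ : ℝ → ℝ := fun t => f t (u t) / u t with ha₁
  set a₃ : ℝ → ℝ := fun t => f t (w t) / w t with ha₃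
  have hm₁c : Continuous m₁ :=
    (hfv.sub hfu).div (hvc.sub huc) fun t => ne_of_gt (sub_pos.2 (hUV t))
  have hm₂c : Continuous m₂ :=
    (hfw.sub hfv).div (hwc.sub hvc) fun t => ne_of_gt (sub_pos.2 (hVW t))
  have ha₁c : Continuous a₁ := hfu.div huc fun t => ne_of_gt (hu_pos t)
  have ha₃c : Continuous a₃ := hfw.div hwc fun t => ne_of_gt (hw_pos t)
  -- periodicity at p
  have hup : u p = u 0 := by simpa using hu_per 0
  have hvp : v p = v 0 := by simpa using hv_per 0
  have hwp : w p = w 0 := by simpa using hw_per 0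
  -- the four zero integrals
  have Im₁ : ∫ t in (0:ℝ)..p, m₁ t = 0 := by
    apply integral_deriv_periodic p (fun t => Real.log (v t - u t)) m₁
    · intro t
      exact ((hv t).sub (hu t)).log (ne_of_gt (sub_pos.2 (hUV t)))
    · exact hm₁c
    · rw [hup, hvp]
  have Im₂ : ∫ t in (0:ℝ)..p, m₂ t = 0 := by
    apply integral_deriv_periodic p (fun t => Real.log (w t - v t)) m₂
    · intro t
      exact ((hw t).sub (hv t)).log (ne_of_gt (sub_pos.2 (hVW t)))
    · exact hm₂c
    · rw [hvp, hwp]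
  have Ia₁ : ∫ t in (0:ℝ)..p, a₁ t = 0 := by
    apply integral_deriv_periodic p (fun t => Real.log (u t)) a₁
    · intro t
      exact (hu t).log (ne_of_gt (hu_pos t))
    · exact ha₁c
    · rw [hup]
  have Ia₃ : ∫ t in (0:ℝ)..p, a₃ t = 0 := by
    apply integral_deriv_periodic p (fun t => Real.log (w t)) a₃
    · intro t
      exact (hw t).log (ne_of_gt (hw_pos t))
    · exact ha₃c
    · rw [hwp]
  set h : ℝ → ℝ := fun t => (m₂ t - a₃ t) - (m₁ t - a₁ t) with hh
  have hhc : Continuous h := (hm₂c.sub ha₃c).sub (hm₁c.sub ha₁c)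
  have Ih : ∫ t in (0:ℝ)..p, h t = 0 := by
    rw [hh]
    beta_reduce
    rw [intervalIntegral.integral_sub (f := fun t => m₂ t - a₃ t) (g := fun t => m₁ t - a₁ t) ((hm₂c.sub ha₃c).intervalIntegrable _ _)
      ((hm₁c.sub ha₁c).intervalIntegrable _ _),
      intervalIntegral.integral_sub (hm₂c.intervalIntegrable _ _)
        (ha₃c.intervalIntegrable _ _),
      intervalIntegral.integral_sub (hm₁c.intervalIntegrable _ _)
        (ha₁c.intervalIntegrable _ _), Im₁, Im₂, Ia₁, Ia₃]
    ring
  have hpt : ∀ t, 0 < h t := by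
    intro t
    have hA := hu_pos t
    have hAB := hUV t
    have hBC := hVW t
    have hB : 0 < v t := hv_pos t
    have hC : 0 < w t := hw_pos t
    have h1 : u t ≠ 0 := ne_of_gt hA
    have h2 : v t ≠ 0 := ne_of_gt hB
    have h3 : w t ≠ 0 := ne_of_gt hC
    have h4 : v t - u t ≠ 0 := ne_of_gt (sub_pos.2 hAB)
    have h5 : w t - v t ≠ 0 := ne_of_gt (sub_pos.2 hBC)
    have hs := slope_aux (f t) (fx t) (fxx t) (fxxx t) (hfx t) (hfxx t) (hfxxx t)
      (hf0 t) (hpos t) hA hAB hBC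
    have e₁ : m₁ t - a₁ t =
        v t * ((f t (v t) / v t - f t (u t) / u t) / (v t - u t)) := by
      rw [hm₁, ha₁]
      field_simp
      ring
    have e₂ : m₂ t - a₃ t =
        v t * ((f t (w t) / w t - f t (v t) / v t) / (w t - v t)) := by
      rw [hm₂, ha₃]
      field_simp
      ring
    rw [hh]
    simp only []
    rw [e₁, e₂]
    have := mul_lt_mul_of_pos_left hs hB
    linarith
  have : 0 < ∫ t in (0:ℝ)..p, h t :=
    intervalIntegral.intervalIntegral_pos_of_pos_on (hhc.intervalIntegrable _ _)
      (fun x _ => hpt x) hp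
  rw [Ih] at this
  exact lt_irrefl _ this


/-- Lemma 5.3: if `f(t, 0) = 0`, `f` is `p`-periodic in `t`, and
`f_xxx(t, x) > 0` for `x > 0`, then `x' = f(t, x)` has at most two positive
`p`-periodic solutions. -/
theorem at_most_two_positive_periodic_solutions_of_f
    (p : ℝ) (hp : 0 < p)
    (f fx fxx fxxx : ℝ → ℝ → ℝ)
    (hf_cont : Continuous fun q : ℝ × ℝ => f q.1 q.2)
    (hfx_cont : Continuous fun q : ℝ × ℝ => fx q.1 q.2)
    (hfxx_cont : Continuous fun q : ℝ × ℝ => fxx q.1 q.2)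
    (hfxxx_cont : Continuous fun q : ℝ × ℝ => fxxx q.1 q.2)
    (hfx : ∀ t x : ℝ, HasDerivAt (f t) (fx t x) x)
    (hfxx : ∀ t x : ℝ, HasDerivAt (fx t) (fxx t x) x)
    (hfxxx : ∀ t x : ℝ, HasDerivAt (fxx t) (fxxx t x) x)
    (hf0 : ∀ t : ℝ, f t 0 = 0)
    (hper : ∀ t x : ℝ, f (t + p) x = f t x)
    (hpos : ∀ t : ℝ, ∀ x : ℝ, 0 < x → 0 < fxxx t x) :
    ∀ x₁ x₂ x₃ : ℝ → ℝ,
      ((∀ t, 0 < x₁ t) ∧ (∀ t, x₁ (t + p) = x₁ t) ∧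
        ∀ t, HasDerivAt x₁ (f t (x₁ t)) t) →
      ((∀ t, 0 < x₂ t) ∧ (∀ t, x₂ (t + p) = x₂ t) ∧
        ∀ t, HasDerivAt x₂ (f t (x₂ t)) t) →
      ((∀ t, 0 < x₃ t) ∧ (∀ t, x₃ (t + p) = x₃ t) ∧
        ∀ t, HasDerivAt x₃ (f t (x₃ t)) t) →
      x₁ = x₂ ∨ x₁ = x₃ ∨ x₂ = x₃ := by
  rintro x₁ x₂ x₃ ⟨h1pos, h1per, h1d⟩ ⟨h2pos, h2per, h2d⟩ ⟨h3pos, h3per, h3d⟩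
  have EQ : ∀ a b : ℝ → ℝ, (∀ t, HasDerivAt a (f t (a t)) t) →
      (∀ t, HasDerivAt b (f t (b t)) t) → a 0 = b 0 → a = b :=
    fun a b hda hdb he => ode_unique f fx hfx_cont hfx a b hda hdb 0 he
  have NT : ∀ a b c : ℝ → ℝ,
      (∀ t, 0 < a t) → (∀ t, a (t + p) = a t) → (∀ t, HasDerivAt a (f t (a t)) t) →
      (∀ t, 0 < b t) → (∀ t, b (t + p) = b t) → (∀ t, HasDerivAt b (f t (b t)) t) →
      (∀ t, 0 < c t) → (∀ t, c (t + p) = c t) → (∀ t, HasDerivAt c (f t (c t)) t) →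
      a 0 < b 0 → b 0 < c 0 → False :=
    fun a b c hap haper had hbp hbper hbd hcp hcper hcd h1 h2 =>
      no_three p hp f fx fxx fxxx hf_cont hfx_cont hfx hfxx hfxxx hf0 hpos
        a b c hap haper had hbp hbper hbd hcp hcper hcd h1 h2
  rcases lt_trichotomy (x₁ 0) (x₂ 0) with h12 | h12 | h12
  · rcases lt_trichotomy (x₂ 0) (x₃ 0) with h23 | h23 | h23
    · exact (NT x₁ x₂ x₃ h1pos h1per h1d h2pos h2per h2d h3pos h3per h3d h12 h23).elim
    · exact Or.inr (Or.inr (EQ x₂ x₃ h2d h3d h23))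
    · rcases lt_trichotomy (x₁ 0) (x₃ 0) with h13 | h13 | h13
      · exact (NT x₁ x₃ x₂ h1pos h1per h1d h3pos h3per h3d h2pos h2per h2d h13 h23).elim
      · exact Or.inr (Or.inl (EQ x₁ x₃ h1d h3d h13))
      · exact (NT x₃ x₁ x₂ h3pos h3per h3d h1pos h1per h1d h2pos h2per h2d h13 h12).elim
  · exact Or.inl (EQ x₁ x₂ h1d h2d h12)
  · rcases lt_trichotomy (x₁ 0) (x₃ 0) with h13 | h13 | h13
    · exact (NT x₂ x₁ x₃ h2pos h2per h2d h1pos h1per h1d h3pos h3per h3d h12 h13).elim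
    · exact Or.inr (Or.inl (EQ x₁ x₃ h1d h3d h13))
    · rcases lt_trichotomy (x₂ 0) (x₃ 0) with h23 | h23 | h23
      · exact (NT x₂ x₃ x₁ h2pos h2per h2d h3pos h3per h3d h1pos h1per h1d h23 h13).elim
      · exact Or.inr (Or.inr (EQ x₂ x₃ h2d h3d h23))
      · exact (NT x₃ x₂ x₁ h3pos h3per h3d h2pos h2per h2d h1pos h1per h1d h23 h12).elim
end

section
/- Let p > 0 and let f : ℝ × ℝ → ℝ be continuous with three continuous partial derivatives in the second variable, satisfying f(t + p, x) = f(t, x) for all t, x ∈ ℝ and ∂³f/∂x³(t, x) > 0 for all t, x ∈ ℝ (or the opposite strict inequality for all t, x). Then the equation x'(t) = f(t, x(t)) has at most three p-periodic solutions; that is, there are at most three differentiable functions x : ℝ → ℝ with x(t + p) = x(t) for all t that satisfy x'(t) = f(t, x(t)) for all t. -/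
set_option maxHeartbeats 1000000

open Set

lemma cubic_hasDerivAt (A B C D : ℝ) (x : ℝ) :
    HasDerivAt (fun x : ℝ => A*x^3 + B*x^2 + C*x + D) (3*A*x^2 + 2*B*x + C) x := by
  have h := ((((hasDerivAt_pow 3 x).const_mul A).add
      ((hasDerivAt_pow 2 x).const_mul B)).add ((hasDerivAt_id x).const_mul C)).add_const D
  refine h.congr_deriv ?_
  push_cast
  ring

lemma quad_hasDerivAt (A B C : ℝ) (x : ℝ) :
    HasDerivAt (fun x : ℝ => 3*A*x^2 + 2*B*x + C) (6*A*x + 2*B) x := by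
  have h := (((hasDerivAt_pow 2 x).const_mul (3*A)).add
      ((hasDerivAt_id x).const_mul (2*B))).add_const C
  refine h.congr_deriv ?_
  push_cast
  ring

lemma lin_hasDerivAt (A B : ℝ) (x : ℝ) :
    HasDerivAt (fun x : ℝ => 6*A*x + 2*B) (6*A) x := by
  have h := ((hasDerivAt_id x).const_mul (6*A)).add_const (2*B)
  refine h.congr_deriv ?_
  ring

/-- Third-order mean value inequality: if `g''' > 0` then the alternating sum of
divided differences over `a < b < c < d` is positive. -/
lemma key_ineq (g g1 g2 g3 : ℝ → ℝ)
    (h1 : ∀ x, HasDerivAt g (g1 x) x) (h2 : ∀ x, HasDerivAt g1 (g2 x) x)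
    (h3 : ∀ x, HasDerivAt g2 (g3 x) x) (hpos : ∀ x, 0 < g3 x)
    {a b c d : ℝ} (hab : a < b) (hbc : b < c) (hcd : c < d) :
    (g c - g b)/(c-b) + (g d - g a)/(d-a) < (g d - g b)/(d-b) + (g c - g a)/(c-a) := by
  have hac : a < c := hab.trans hbc
  have had : a < d := hac.trans hcd
  have hbd : b < d := hbc.trans hcd
  have nba : b - a ≠ 0 := sub_ne_zero.2 hab.ne'
  have nca : c - a ≠ 0 := sub_ne_zero.2 hac.ne'
  have nda : d - a ≠ 0 := sub_ne_zero.2 had.ne'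
  have ncb : c - b ≠ 0 := sub_ne_zero.2 hbc.ne'
  have ndb : d - b ≠ 0 := sub_ne_zero.2 hbd.ne'
  have ndc : d - c ≠ 0 := sub_ne_zero.2 hcd.ne'
  obtain ⟨c1, hc1⟩ : ∃ y, g b - g a = y*(b-a) := ⟨_, (div_mul_cancel₀ _ nba).symm⟩
  obtain ⟨s2, hs2⟩ : ∃ y, g c - g b = y*(c-b) := ⟨_, (div_mul_cancel₀ _ ncb).symm⟩
  obtain ⟨s3, hs3⟩ : ∃ y, g d - g c = y*(d-c) := ⟨_, (div_mul_cancel₀ _ ndc).symm⟩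
  obtain ⟨c2, hc2⟩ : ∃ y, s2 - c1 = y*(c-a) := ⟨_, (div_mul_cancel₀ _ nca).symm⟩
  obtain ⟨t2, ht2⟩ : ∃ y, s3 - s2 = y*(d-b) := ⟨_, (div_mul_cancel₀ _ ndb).symm⟩
  obtain ⟨K, hKd⟩ : ∃ y, t2 - c2 = y*(d-a) := ⟨_, (div_mul_cancel₀ _ nda).symm⟩
  set A2 := c2 - K*(a+b+c) with hA2
  set A1 := c1 - c2*(a+b) + K*(a*b+a*c+b*c) with hA1
  set A0 := g a - c1*a + c2*(a*b) - K*(a*b*c) with hA0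
  have hEd : ∀ x, HasDerivAt (fun x => g x - (K*x^3 + A2*x^2 + A1*x + A0))
      (g1 x - (3*K*x^2 + 2*A2*x + A1)) x := fun x => (h1 x).sub (cubic_hasDerivAt K A2 A1 A0 x)
  have hE1d : ∀ x, HasDerivAt (fun x => g1 x - (3*K*x^2 + 2*A2*x + A1))
      (g2 x - (6*K*x + 2*A2)) x := fun x => (h2 x).sub (quad_hasDerivAt K A2 A1 x)
  have hE2d : ∀ x, HasDerivAt (fun x => g2 x - (6*K*x + 2*A2)) (g3 x - 6*K) x :=
    fun x => (h3 x).sub (lin_hasDerivAt K A2 x)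
  have hEc : Continuous fun x => g x - (K*x^3 + A2*x^2 + A1*x + A0) :=
    continuous_iff_continuousAt.2 fun x => (hEd x).continuousAt
  have hE1c : Continuous fun x => g1 x - (3*K*x^2 + 2*A2*x + A1) :=
    continuous_iff_continuousAt.2 fun x => (hE1d x).continuousAt
  have hE2c : Continuous fun x => g2 x - (6*K*x + 2*A2) :=
    continuous_iff_continuousAt.2 fun x => (hE2d x).continuousAt
  have hEab : g a - (K*a^3 + A2*a^2 + A1*a + A0) = g b - (K*b^3 + A2*b^2 + A1*b + A0) := by
    rw [hA2, hA1, hA0]; linear_combination -hc1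
  have hEbc : g b - (K*b^3 + A2*b^2 + A1*b + A0) = g c - (K*c^3 + A2*c^2 + A1*c + A0) := by
    rw [hA2, hA1, hA0]; linear_combination -hs2 - (c-b)*hc2
  have hEcd : g c - (K*c^3 + A2*c^2 + A1*c + A0) = g d - (K*d^3 + A2*d^2 + A1*d + A0) := by
    rw [hA2, hA1, hA0]
    linear_combination -hs3 - (d-c)*hc2 - (d-c)*ht2 - (d-b)*(d-c)*hKd
  obtain ⟨u1, hu1, hu1'⟩ := exists_hasDerivAt_eq_zero hab hEc.continuousOn hEab
    fun x _ => hEd x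
  obtain ⟨u2, hu2, hu2'⟩ := exists_hasDerivAt_eq_zero hbc hEc.continuousOn hEbc
    fun x _ => hEd x
  obtain ⟨u3, hu3, hu3'⟩ := exists_hasDerivAt_eq_zero hcd hEc.continuousOn hEcd
    fun x _ => hEd x
  obtain ⟨v1, hv1, hv1'⟩ := exists_hasDerivAt_eq_zero (hu1.2.trans hu2.1) hE1c.continuousOn
    (hu1'.trans hu2'.symm) fun x _ => hE1d x
  obtain ⟨v2, hv2, hv2'⟩ := exists_hasDerivAt_eq_zero (hu2.2.trans hu3.1) hE1c.continuousOn
    (hu2'.trans hu3'.symm) fun x _ => hE1d x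
  obtain ⟨w, hw, hw'⟩ := exists_hasDerivAt_eq_zero (hv1.2.trans hv2.1) hE2c.continuousOn
    (hv1'.trans hv2'.symm) fun x _ => hE2d x
  have hKpos : 0 < K := by
    have h6 : g3 w - 6*K = 0 := hw'
    linarith [hpos w]
  have hQval : (g d - g b)/(d-b) + (g c - g a)/(c-a)
      - ((g c - g b)/(c-b) + (g d - g a)/(d-a)) = (b-a)*(d-c)*K := by
    set e := g a - (K*a^3 + A2*a^2 + A1*a + A0) with he
    have hga : g a = K*a^3 + A2*a^2 + A1*a + A0 + e := by rw [he]; ring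
    have hgb : g b = K*b^3 + A2*b^2 + A1*b + A0 + e := by rw [he]; linear_combination -hEab
    have hgc : g c = K*c^3 + A2*c^2 + A1*c + A0 + e := by
      rw [he]; linear_combination -hEab - hEbc
    have hgd : g d = K*d^3 + A2*d^2 + A1*d + A0 + e := by
      rw [he]; linear_combination -hEab - hEbc - hEcd
    rw [hga, hgb, hgc, hgd]
    field_simp
    ring
  linarith [hQval, mul_pos (mul_pos (sub_pos.2 hab) (sub_pos.2 hcd)) hKpos]

/-- A continuous nowhere-vanishing function positive at `0` is positive everywhere. -/
lemma pos_of_ne (h : ℝ → ℝ) (hc : Continuous h) (hne : ∀ t, h t ≠ 0) (h0 : 0 < h 0) :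
    ∀ t, 0 < h t := by
  intro t
  by_contra hle
  push_neg at hle
  have hlt : h t < 0 := lt_of_le_of_ne hle (hne t)
  have hmem : (0:ℝ) ∈ uIcc (h 0) (h t) := mem_uIcc.2 (Or.inr ⟨hlt.le, h0.le⟩)
  obtain ⟨s, _, hs⟩ := intermediate_value_uIcc (hc.continuousOn (s := uIcc 0 t)) hmem
  exact hne s hs

/-- Two periodic solutions of the same ODE agreeing at one point agree everywhere. -/
lemma sols_eq (p : ℝ) (hp : 0 < p) (f fx : ℝ → ℝ → ℝ)
    (hfx_cont : Continuous fun q : ℝ × ℝ => fx q.1 q.2)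
    (hfx : ∀ t x : ℝ, HasDerivAt (f t) (fx t x) x)
    (hper : ∀ t x : ℝ, f (t + p) x = f t x)
    (u v : ℝ → ℝ)
    (hu_per : ∀ t, u (t + p) = u t) (hu_d : ∀ t, HasDerivAt u (f t (u t)) t)
    (hv_per : ∀ t, v (t + p) = v t) (hv_d : ∀ t, HasDerivAt v (f t (v t)) t)
    (t₀ : ℝ) (heq : u t₀ = v t₀) : u = v := by
  have hu_cont : Continuous u := continuous_iff_continuousAt.2 fun t => (hu_d t).continuousAt
  have hv_cont : Continuous v := continuous_iff_continuousAt.2 fun t => (hv_d t).continuousAt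
  obtain ⟨Mu, hMu⟩ := (isCompact_Icc (a := (0:ℝ)) (b := p)).exists_bound_of_continuousOn
    hu_cont.continuousOn
  obtain ⟨Mv, hMv⟩ := (isCompact_Icc (a := (0:ℝ)) (b := p)).exists_bound_of_continuousOn
    hv_cont.continuousOn
  set M := max Mu Mv with hM
  have huB : ∀ t, |u t| ≤ M := by
    intro t
    have hup : Function.Periodic u p := hu_per
    obtain ⟨y, hy, hy'⟩ := hup.exists_mem_Ico₀ hp t
    rw [hy', ← Real.norm_eq_abs]
    exact le_trans (hMu y ⟨hy.1, hy.2.le⟩) (le_max_left _ _)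
  have hvB : ∀ t, |v t| ≤ M := by
    intro t
    have hvp : Function.Periodic v p := hv_per
    obtain ⟨y, hy, hy'⟩ := hvp.exists_mem_Ico₀ hp t
    rw [hy', ← Real.norm_eq_abs]
    exact le_trans (hMv y ⟨hy.1, hy.2.le⟩) (le_max_right _ _)
  obtain ⟨K₀, hK₀⟩ := ((isCompact_Icc (a := (0:ℝ)) (b := p)).prod
    (isCompact_Icc (a := -M) (b := M))).exists_bound_of_continuousOn hfx_cont.continuousOn
  have hfxper : ∀ t x : ℝ, fx (t + p) x = fx t x := by
    intro t x
    have h1 := hfx (t + p) x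
    have h2 : f (t + p) = f t := funext fun y => hper t y
    rw [h2] at h1
    exact h1.unique (hfx t x)
  have hfxbound : ∀ t : ℝ, ∀ x ∈ Icc (-M) M, |fx t x| ≤ K₀ := by
    intro t x hx
    have hpx : Function.Periodic (fun s => fx s x) p := fun s => hfxper s x
    obtain ⟨y, hy, hy'⟩ := hpx.exists_mem_Ico₀ hp t
    have : fx t x = fx y x := hy'
    rw [this, ← Real.norm_eq_abs]
    exact hK₀ (y, x) ⟨⟨hy.1, hy.2.le⟩, hx⟩
  set K : NNReal := ⟨max K₀ 0, le_max_right _ _⟩ with hKdef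
  have hLip : ∀ t, LipschitzOnWith K (f t) (Icc (-M) M) := by
    intro t
    apply (convex_Icc (-M) M).lipschitzOnWith_of_nnnorm_hasDerivWithin_le
      (f' := fun x => fx t x) (fun x hx => (hfx t x).hasDerivWithinAt)
    intro x hx
    refine NNReal.coe_le_coe.1 ?_
    rw [coe_nnnorm, Real.norm_eq_abs]
    exact le_trans (hfxbound t x hx) (le_max_left _ _)
  funext T
  have ht₀ : t₀ ∈ Ioo (min t₀ T - 1) (max t₀ T + 1) :=
    ⟨by linarith [min_le_left t₀ T], by linarith [le_max_left t₀ T]⟩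
  have hEq := ODE_solution_unique_of_mem_Icc (v := f) (s := fun _ => Icc (-M) M) (K := K)
    (fun t _ => hLip t) ht₀ hu_cont.continuousOn (fun t _ => hu_d t)
    (fun t _ => mem_Icc.2 (abs_le.1 (huB t)))
    hv_cont.continuousOn (fun t _ => hv_d t)
    (fun t _ => mem_Icc.2 (abs_le.1 (hvB t))) heq
  exact hEq ⟨by linarith [min_le_right t₀ T], by linarith [le_max_right t₀ T]⟩

/-- There are no four everywhere-strictly-ordered periodic solutions. -/
lemma no4 (p : ℝ) (hp : 0 < p) (f fx fxx fxxx : ℝ → ℝ → ℝ)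
    (hfx : ∀ t x : ℝ, HasDerivAt (f t) (fx t x) x)
    (hfxx : ∀ t x : ℝ, HasDerivAt (fx t) (fxx t x) x)
    (hfxxx : ∀ t x : ℝ, HasDerivAt (fxx t) (fxxx t x) x)
    (hsign : (∀ t x : ℝ, 0 < fxxx t x) ∨ (∀ t x : ℝ, fxxx t x < 0))
    (y₁ y₂ y₃ y₄ : ℝ → ℝ)
    (h₁p : ∀ t, y₁ (t + p) = y₁ t) (h₁d : ∀ t, HasDerivAt y₁ (f t (y₁ t)) t)
    (h₂p : ∀ t, y₂ (t + p) = y₂ t) (h₂d : ∀ t, HasDerivAt y₂ (f t (y₂ t)) t)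
    (h₃p : ∀ t, y₃ (t + p) = y₃ t) (h₃d : ∀ t, HasDerivAt y₃ (f t (y₃ t)) t)
    (h₄p : ∀ t, y₄ (t + p) = y₄ t) (h₄d : ∀ t, HasDerivAt y₄ (f t (y₄ t)) t)
    (o12 : ∀ t, y₁ t < y₂ t) (o23 : ∀ t, y₂ t < y₃ t) (o34 : ∀ t, y₃ t < y₄ t) : False := by
  have o13 : ∀ t, y₁ t < y₃ t := fun t => (o12 t).trans (o23 t)
  have o24 : ∀ t, y₂ t < y₄ t := fun t => (o23 t).trans (o34 t)
  have o14 : ∀ t, y₁ t < y₄ t := fun t => (o13 t).trans (o34 t)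
  set L : ℝ → ℝ := fun t => Real.log (y₃ t - y₁ t) + Real.log (y₄ t - y₂ t)
      - Real.log (y₃ t - y₂ t) - Real.log (y₄ t - y₁ t) with hL
  set Q : ℝ → ℝ := fun t =>
      (f t (y₃ t) - f t (y₁ t))/(y₃ t - y₁ t) + (f t (y₄ t) - f t (y₂ t))/(y₄ t - y₂ t)
      - (f t (y₃ t) - f t (y₂ t))/(y₃ t - y₂ t) - (f t (y₄ t) - f t (y₁ t))/(y₄ t - y₁ t)
    with hQ
  have hLd : ∀ t, HasDerivAt L (Q t) t := by
    intro t
    have d31 : HasDerivAt (fun s => Real.log (y₃ s - y₁ s))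
        ((f t (y₃ t) - f t (y₁ t))/(y₃ t - y₁ t)) t :=
      ((h₃d t).sub (h₁d t)).log (sub_ne_zero.2 (o13 t).ne')
    have d42 : HasDerivAt (fun s => Real.log (y₄ s - y₂ s))
        ((f t (y₄ t) - f t (y₂ t))/(y₄ t - y₂ t)) t :=
      ((h₄d t).sub (h₂d t)).log (sub_ne_zero.2 (o24 t).ne')
    have d32 : HasDerivAt (fun s => Real.log (y₃ s - y₂ s))
        ((f t (y₃ t) - f t (y₂ t))/(y₃ t - y₂ t)) t :=
      ((h₃d t).sub (h₂d t)).log (sub_ne_zero.2 (o23 t).ne')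
    have d41 : HasDerivAt (fun s => Real.log (y₄ s - y₁ s))
        ((f t (y₄ t) - f t (y₁ t))/(y₄ t - y₁ t)) t :=
      ((h₄d t).sub (h₁d t)).log (sub_ne_zero.2 (o14 t).ne')
    simp only [hL, hQ]
    exact ((d31.add d42).sub d32).sub d41
  have hLc : Continuous L := continuous_iff_continuousAt.2 fun t => (hLd t).continuousAt
  have hLeq : L p = L 0 := by
    have e1 : y₁ p = y₁ 0 := by simpa using h₁p 0
    have e2 : y₂ p = y₂ 0 := by simpa using h₂p 0
    have e3 : y₃ p = y₃ 0 := by simpa using h₃p 0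
    have e4 : y₄ p = y₄ 0 := by simpa using h₄p 0
    simp only [hL, e1, e2, e3, e4]
  rcases hsign with hs | hs
  · have hQpos : ∀ t, 0 < Q t := by
      intro t
      have hkey := key_ineq (f t) (fx t) (fxx t) (fxxx t) (hfx t) (hfxx t) (hfxxx t)
        (fun x => hs t x) (o12 t) (o23 t) (o34 t)
      simp only [hQ]
      linarith
    have hmono : StrictMonoOn L (Icc 0 p) := strictMonoOn_of_deriv_pos (convex_Icc 0 p)
      hLc.continuousOn (fun t _ => by rw [(hLd t).deriv]; exact hQpos t)
    have := hmono (left_mem_Icc.2 hp.le) (right_mem_Icc.2 hp.le) hp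
    linarith
  · have hQneg : ∀ t, Q t < 0 := by
      intro t
      have hkey := key_ineq (fun x => -f t x) (fun x => -fx t x) (fun x => -fxx t x)
        (fun x => -fxxx t x) (fun x => (hfx t x).neg) (fun x => (hfxx t x).neg)
        (fun x => (hfxxx t x).neg) (fun x => neg_pos.2 (hs t x)) (o12 t) (o23 t) (o34 t)
      simp only [show ∀ u v w : ℝ, (-u - -v)/w = -((u - v)/w) from fun u v w => by ring] at hkey
      simp only [hQ]
      linarith
    have hanti : StrictAntiOn L (Icc 0 p) := strictAntiOn_of_deriv_neg (convex_Icc 0 p)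
      hLc.continuousOn (fun t _ => by rw [(hLd t).deriv]; exact hQneg t)
    have := hanti (left_mem_Icc.2 hp.le) (right_mem_Icc.2 hp.le) hp
    linarith

/-- Theorem 5.1: if `f` is `p`-periodic in `t` and `f_xxx > 0` everywhere
(or `f_xxx < 0` everywhere), then `x' = f(t, x)` has at most three
`p`-periodic solutions. -/
theorem at_most_three_periodic_solutions
    (p : ℝ) (hp : 0 < p)
    (f fx fxx fxxx : ℝ → ℝ → ℝ)
    (hf_cont : Continuous fun q : ℝ × ℝ => f q.1 q.2)
    (hfx_cont : Continuous fun q : ℝ × ℝ => fx q.1 q.2)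
    (hfxx_cont : Continuous fun q : ℝ × ℝ => fxx q.1 q.2)
    (hfxxx_cont : Continuous fun q : ℝ × ℝ => fxxx q.1 q.2)
    (hfx : ∀ t x : ℝ, HasDerivAt (f t) (fx t x) x)
    (hfxx : ∀ t x : ℝ, HasDerivAt (fx t) (fxx t x) x)
    (hfxxx : ∀ t x : ℝ, HasDerivAt (fxx t) (fxxx t x) x)
    (hper : ∀ t x : ℝ, f (t + p) x = f t x)
    (hsign : (∀ t x : ℝ, 0 < fxxx t x) ∨ (∀ t x : ℝ, fxxx t x < 0)) :
    ∀ x₁ x₂ x₃ x₄ : ℝ → ℝ,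
      ((∀ t, x₁ (t + p) = x₁ t) ∧ ∀ t, HasDerivAt x₁ (f t (x₁ t)) t) →
      ((∀ t, x₂ (t + p) = x₂ t) ∧ ∀ t, HasDerivAt x₂ (f t (x₂ t)) t) →
      ((∀ t, x₃ (t + p) = x₃ t) ∧ ∀ t, HasDerivAt x₃ (f t (x₃ t)) t) →
      ((∀ t, x₄ (t + p) = x₄ t) ∧ ∀ t, HasDerivAt x₄ (f t (x₄ t)) t) →
      x₁ = x₂ ∨ x₁ = x₃ ∨ x₁ = x₄ ∨ x₂ = x₃ ∨ x₂ = x₄ ∨ x₃ = x₄ := by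
  intro x1 x2 x3 x4 H1 H2 H3 H4
  by_contra hcon
  push_neg at hcon
  obtain ⟨hc12, hc13, hc14, hc23, hc24, hc34⟩ := hcon
  have cont : ∀ (y : ℝ → ℝ), (∀ t, HasDerivAt y (f t (y t)) t) → Continuous y :=
    fun y hy => continuous_iff_continuousAt.2 fun t => (hy t).continuousAt
  have hne : ∀ u v : ℝ → ℝ, ((∀ t, u (t + p) = u t) ∧ ∀ t, HasDerivAt u (f t (u t)) t) →
      ((∀ t, v (t + p) = v t) ∧ ∀ t, HasDerivAt v (f t (v t)) t) → u ≠ v → ∀ t, u t ≠ v t :=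
    fun u v hu hv huv t h =>
      huv (sols_eq p hp f fx hfx_cont hfx hper u v hu.1 hu.2 hv.1 hv.2 t h)
  have ord : ∀ u v : ℝ → ℝ, Continuous u → Continuous v → (∀ t, u t ≠ v t) →
      (∀ t, u t < v t) ∨ (∀ t, v t < u t) := by
    intro u v hcu hcv hne'
    rcases lt_or_gt_of_ne (hne' 0) with h | h
    · left
      intro t
      have := pos_of_ne (fun s => v s - u s) (hcv.sub hcu)
        (fun s => sub_ne_zero.2 (hne' s).symm) (sub_pos.2 h) t
      simpa [sub_pos] using this
    · right
      intro t
      have := pos_of_ne (fun s => u s - v s) (hcu.sub hcv)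
        (fun s => sub_ne_zero.2 (hne' s)) (sub_pos.2 h) t
      simpa [sub_pos] using this
  have c1 := cont x1 H1.2
  have c2 := cont x2 H2.2
  have c3 := cont x3 H3.2
  have c4 := cont x4 H4.2
  have h12 := ord x1 x2 c1 c2 (hne _ _ H1 H2 hc12)
  have h13 := ord x1 x3 c1 c3 (hne _ _ H1 H3 hc13)
  have h14 := ord x1 x4 c1 c4 (hne _ _ H1 H4 hc14)
  have h23 := ord x2 x3 c2 c3 (hne _ _ H2 H3 hc23)
  have h24 := ord x2 x4 c2 c4 (hne _ _ H2 H4 hc24)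
  have h34 := ord x3 x4 c3 c4 (hne _ _ H3 H4 hc34)
  have KEY := no4 p hp f fx fxx fxxx hfx hfxx hfxxx hsign
  rcases h12 with h12 | h12 <;> rcases h13 with h13 | h13 <;> rcases h14 with h14 | h14 <;>
    rcases h23 with h23 | h23 <;> rcases h24 with h24 | h24 <;> rcases h34 with h34 | h34 <;>
    first
      | exact KEY x1 x2 x3 x4 H1.1 H1.2 H2.1 H2.2 H3.1 H3.2 H4.1 H4.2 h12 h23 h34
      | exact KEY x1 x2 x4 x3 H1.1 H1.2 H2.1 H2.2 H4.1 H4.2 H3.1 H3.2 h12 h24 h34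
      | exact KEY x1 x3 x2 x4 H1.1 H1.2 H3.1 H3.2 H2.1 H2.2 H4.1 H4.2 h13 h23 h24
      | exact KEY x1 x3 x4 x2 H1.1 H1.2 H3.1 H3.2 H4.1 H4.2 H2.1 H2.2 h13 h34 h24
      | exact KEY x1 x4 x2 x3 H1.1 H1.2 H4.1 H4.2 H2.1 H2.2 H3.1 H3.2 h14 h24 h23
      | exact KEY x1 x4 x3 x2 H1.1 H1.2 H4.1 H4.2 H3.1 H3.2 H2.1 H2.2 h14 h34 h23
      | exact KEY x2 x1 x3 x4 H2.1 H2.2 H1.1 H1.2 H3.1 H3.2 H4.1 H4.2 h12 h13 h34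
      | exact KEY x2 x1 x4 x3 H2.1 H2.2 H1.1 H1.2 H4.1 H4.2 H3.1 H3.2 h12 h14 h34
      | exact KEY x2 x3 x1 x4 H2.1 H2.2 H3.1 H3.2 H1.1 H1.2 H4.1 H4.2 h23 h13 h14
      | exact KEY x2 x3 x4 x1 H2.1 H2.2 H3.1 H3.2 H4.1 H4.2 H1.1 H1.2 h23 h34 h14
      | exact KEY x2 x4 x1 x3 H2.1 H2.2 H4.1 H4.2 H1.1 H1.2 H3.1 H3.2 h24 h14 h13
      | exact KEY x2 x4 x3 x1 H2.1 H2.2 H4.1 H4.2 H3.1 H3.2 H1.1 H1.2 h24 h34 h13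
      | exact KEY x3 x1 x2 x4 H3.1 H3.2 H1.1 H1.2 H2.1 H2.2 H4.1 H4.2 h13 h12 h24
      | exact KEY x3 x1 x4 x2 H3.1 H3.2 H1.1 H1.2 H4.1 H4.2 H2.1 H2.2 h13 h14 h24
      | exact KEY x3 x2 x1 x4 H3.1 H3.2 H2.1 H2.2 H1.1 H1.2 H4.1 H4.2 h23 h12 h14
      | exact KEY x3 x2 x4 x1 H3.1 H3.2 H2.1 H2.2 H4.1 H4.2 H1.1 H1.2 h23 h24 h14
      | exact KEY x3 x4 x1 x2 H3.1 H3.2 H4.1 H4.2 H1.1 H1.2 H2.1 H2.2 h34 h14 h12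
      | exact KEY x3 x4 x2 x1 H3.1 H3.2 H4.1 H4.2 H2.1 H2.2 H1.1 H1.2 h34 h24 h12
      | exact KEY x4 x1 x2 x3 H4.1 H4.2 H1.1 H1.2 H2.1 H2.2 H3.1 H3.2 h14 h12 h23
      | exact KEY x4 x1 x3 x2 H4.1 H4.2 H1.1 H1.2 H3.1 H3.2 H2.1 H2.2 h14 h13 h23
      | exact KEY x4 x2 x1 x3 H4.1 H4.2 H2.1 H2.2 H1.1 H1.2 H3.1 H3.2 h24 h12 h13
      | exact KEY x4 x2 x3 x1 H4.1 H4.2 H2.1 H2.2 H3.1 H3.2 H1.1 H1.2 h24 h23 h13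
      | exact KEY x4 x3 x1 x2 H4.1 H4.2 H3.1 H3.2 H1.1 H1.2 H2.1 H2.2 h34 h13 h12
      | exact KEY x4 x3 x2 x1 H4.1 H4.2 H3.1 H3.2 H2.1 H2.2 H1.1 H1.2 h34 h23 h12
      | linarith [h12 0, h13 0, h14 0, h23 0, h24 0, h34 0]
end
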